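/- arXiv:2511.15625 — 8 statements merged into one kernel-verified Lean document; each statement's English description precedes it below -/
import Mathlib

section
/- Let A be a bounded normal operator on a complex Hilbert space H and let y ∈ H with Ay ≠ 0. Then the sequence n ↦ ‖A^{n+1}y‖/‖A^n y‖ is monotonically nondecreasing. -/
open ContinuousLinearMap

lemma norm_adjoint_apply_eq {H : Type*} [NormedAddCommGroup H] [InnerProductSpace ℂ H]
    [CompleteSpace H] (A : H →L[ℂ] H) (hA : IsStarNormal A) (x : H) :
    ‖adjoint A x‖ = ‖A x‖ := by
  have h := hA.star_comm_self
  have h1 : ‖A x‖ ^ 2 = RCLike.re (inner ℂ ((adjoint A * A) x) x : ℂ) := by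
    simpa using apply_norm_sq_eq_inner_adjoint_left A x
  have h2 : ‖adjoint A x‖ ^ 2 = RCLike.re (inner ℂ ((A * adjoint A) x) x : ℂ) := by
    have := apply_norm_sq_eq_inner_adjoint_left (adjoint A) x
    simpa [adjoint_adjoint] using this
  have : ‖adjoint A x‖ ^ 2 = ‖A x‖ ^ 2 := by
    rw [h1, h2]
    congr 1
    rw [show A * adjoint A = adjoint A * A from by rw [← star_eq_adjoint]; exact h.symm]
  nlinarith [norm_nonneg (adjoint A x), norm_nonneg (A x)]

lemma key_ineq {H : Type*} [NormedAddCommGroup H] [InnerProductSpace ℂ H]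
    [CompleteSpace H] (A : H →L[ℂ] H) (hA : IsStarNormal A) (x : H) :
    ‖A x‖ ^ 2 ≤ ‖A (A x)‖ * ‖x‖ := by
  have h1 : ‖A x‖ ^ 2 = RCLike.re (inner ℂ (adjoint A (A x)) x : ℂ) := by
    simpa using apply_norm_sq_eq_inner_adjoint_left A x
  calc ‖A x‖ ^ 2 = RCLike.re (inner ℂ (adjoint A (A x)) x : ℂ) := h1
    _ ≤ ‖(inner ℂ (adjoint A (A x)) x : ℂ)‖ := RCLike.re_le_norm _
    _ ≤ ‖adjoint A (A x)‖ * ‖x‖ := norm_inner_le_norm _ _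
    _ = ‖A (A x)‖ * ‖x‖ := by rw [norm_adjoint_apply_eq A hA]

/-- For a bounded normal operator `A` on a complex Hilbert space and `y` with
`Ay ≠ 0`, the sequence `n ↦ ‖A^{n+1}y‖/‖A^n y‖` is monotonically nondecreasing. -/
theorem stmt_1 {H : Type*} [NormedAddCommGroup H] [InnerProductSpace ℂ H] [CompleteSpace H]
    (A : H →L[ℂ] H) (hA : IsStarNormal A) (y : H) (hy : A y ≠ 0) :
    ∀ n : ℕ, ‖(A ^ (n + 1)) y‖ / ‖(A ^ n) y‖ ≤ ‖(A ^ (n + 2)) y‖ / ‖(A ^ (n + 1)) y‖ := by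
  have hpow : ∀ k : ℕ, A ((A ^ k) y) = (A ^ (k + 1)) y := fun k => by
    rw [pow_succ', ContinuousLinearMap.mul_apply]
  have hne : ∀ n : ℕ, (A ^ n) y ≠ 0 := by
    intro n
    induction n with
    | zero => simpa using fun h => hy (by simp [h])
    | succ k ih =>
      intro h
      rcases k with _ | m
      · exact hy (by simpa [hpow 0] using h)
      · have hk := key_ineq A hA ((A ^ m) y)
        rw [hpow m, hpow (m+1), h] at hk
        simp only [norm_zero, zero_mul] at hk
        have : ‖(A ^ (m + 1)) y‖ = 0 := by nlinarith [norm_nonneg ((A ^ (m+1)) y)]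
        exact ih (norm_eq_zero.mp this)
  intro n
  have h1 : (0:ℝ) < ‖(A ^ n) y‖ := norm_pos_iff.mpr (hne n)
  have h2 : (0:ℝ) < ‖(A ^ (n+1)) y‖ := norm_pos_iff.mpr (hne (n+1))
  rw [div_le_div_iff₀ h1 h2]
  have hk := key_ineq A hA ((A ^ n) y)
  rw [hpow n, hpow (n+1)] at hk
  nlinarith [hk]
end

section
/- Let μ be a finite nonnegative Borel measure on ℂ with compact support, let N_μ be the multiplication operator (N_μ f)(z) = z f(z) on L²(μ), and let f ∈ L²(μ) be nonzero with N_μ f ≠ 0. Set C = ess-sup_{z ∈ supp(f·μ)} |z|. Then lim_{n→∞} ‖N_μ^{n+1} f‖ / ‖N_μ^n f‖ = C. -/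
open MeasureTheory Filter Topology

/-- For a finite compactly supported (here: with a.e.-bounded identity function)
Borel measure `μ` on `ℂ`, the multiplication operator `N_μ f (z) = z f(z)` on `L²(μ)` and a
nonzero `f ∈ L²(μ)` with `N_μ f ≠ 0`, the ratios `‖N_μ^{n+1} f‖/‖N_μ^n f‖` converge to
`C = ess-sup_{z ∈ supp(|f|²dμ)} |z|`.  Norms of powers are expressed via the integrals
`‖N_μ^n f‖ = (∫ |z|^{2n} |f z|² dμ)^{1/2}`. -/
theorem stmt_4 (μ : Measure ℂ) [IsFiniteMeasure μ] (R : ℝ)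
    (hbound : ∀ᵐ z ∂μ, ‖z‖ ≤ R)
    (f : ℂ → ℂ) (hf : MemLp f 2 μ)
    (hf0 : ∫ z, ‖f z‖ ^ 2 ∂μ ≠ 0)
    (hNf0 : ∫ z, ‖z‖ ^ 2 * ‖f z‖ ^ 2 ∂μ ≠ 0)
    (C : ℝ)
    (hC : C = (essSup (fun z : ℂ => (‖z‖₊ : ENNReal))
      (μ.withDensity fun z => ENNReal.ofReal (‖f z‖ ^ 2))).toReal) :
    Tendsto (fun n : ℕ =>
        Real.sqrt (∫ z, ‖z‖ ^ (2 * (n + 1)) * ‖f z‖ ^ 2 ∂μ) /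
          Real.sqrt (∫ z, ‖z‖ ^ (2 * n) * ‖f z‖ ^ 2 ∂μ)) atTop (𝓝 C) := by
  set ν : Measure ℂ := μ.withDensity fun z => ENNReal.ofReal (‖f z‖ ^ 2) with hν_def
  set E : ENNReal := essSup (fun z : ℂ => (‖z‖₊ : ENNReal)) ν with hE_def
  -- basic integrability
  have hg_int : Integrable (fun z => ‖f z‖ ^ 2) μ := hf.norm.integrable_sq
  have hg_nonneg : ∀ z, (0:ℝ) ≤ ‖f z‖ ^ 2 := fun z => by positivity
  have hgm : AEStronglyMeasurable (fun z => ‖f z‖ ^ 2) μ := hf.1.norm.pow 2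
  have hA : ∀ n : ℕ, Integrable (fun z => ‖z‖ ^ n * ‖f z‖ ^ 2) μ := by
    intro n
    refine Integrable.mono' (hg_int.const_mul ((max R 0) ^ n))
      ((continuous_norm.pow n).aestronglyMeasurable.mul hgm) ?_
    filter_upwards [hbound] with z hz
    rw [Real.norm_of_nonneg (by positivity)]
    gcongr
    exact le_max_of_le_left hz
  set a : ℕ → ℝ := fun n => ∫ z, ‖z‖ ^ (2 * n) * ‖f z‖ ^ 2 ∂μ with ha_def
  have ha_nonneg : ∀ n, 0 ≤ a n := fun n => integral_nonneg fun z => by positivity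
  -- E is finite
  have hνμ : ν ≪ μ := withDensity_absolutelyContinuous μ _
  have hboundν : ∀ᵐ z ∂ν, ‖z‖ ≤ R := hbound.filter_mono hνμ.ae_le
  have hEtop : E ≠ ⊤ := by
    refine ne_top_of_le_ne_top (ENNReal.ofReal_ne_top (r := R)) ?_
    refine essSup_le_of_ae_le _ ?_
    filter_upwards [hboundν] with z hz
    rw [← enorm_eq_nnnorm, ← ofReal_norm]
    exact ENNReal.ofReal_le_ofReal hz
  have hC0 : 0 ≤ C := hC ▸ ENNReal.toReal_nonneg
  -- key a.e. pointwise bound on μ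
  have hkey : ∀ᵐ z ∂μ, ‖z‖ ≤ C ∨ ‖f z‖ ^ 2 = 0 := by
    have h1 : ∀ᵐ z ∂ν, (fun w : ℂ => (‖w‖₊ : ENNReal)) z ≤ E := ENNReal.ae_le_essSup _
    rw [ae_iff] at h1
    have hNmeas : MeasurableSet {z : ℂ | ¬ ((‖z‖₊ : ENNReal) ≤ E)} := by
      simp only [not_le]
      exact measurableSet_lt measurable_const measurable_nnnorm.coe_nnreal_ennreal
    have hν0 : ∫⁻ z in {z : ℂ | ¬ ((‖z‖₊ : ENNReal) ≤ E)}, ENNReal.ofReal (‖f z‖ ^ 2) ∂μ = 0 := by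
      rw [← withDensity_apply _ hNmeas]
      exact h1
    have h2 := (setLIntegral_eq_zero_iff' hNmeas
      (hgm.aemeasurable.ennreal_ofReal.restrict)).mp hν0
    filter_upwards [h2] with z hz
    by_cases h : (‖z‖₊ : ENNReal) ≤ E
    · left
      have := ENNReal.toReal_mono hEtop h
      simpa [hC] using this
    · right
      have h4 := hz h
      simp only [Pi.zero_apply, ENNReal.ofReal_eq_zero] at h4
      exact le_antisymm h4 (hg_nonneg z)
  -- upper bound: a (n+1) ≤ C^2 * a n
  have hub : ∀ n, a (n + 1) ≤ C ^ 2 * a n := by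
    intro n
    have := integral_mono_ae (hA (2 * (n + 1))) ((hA (2 * n)).const_mul (C ^ 2)) ?_
    · simpa [ha_def, integral_const_mul] using this
    · filter_upwards [hkey] with z hz
      rcases hz with h | h
      · have he : 2 * (n + 1) = 2 + 2 * n := by ring
        rw [he, pow_add, mul_assoc]
        gcongr
      · simp only [h, mul_zero, le_refl]
  -- Cauchy–Schwarz : a (n+1)^2 ≤ a n * a (n+2)
  have hCS : ∀ n, a (n + 1) ^ 2 ≤ a n * a (n + 2) := by
    intro n
    have hum : AEStronglyMeasurable (fun z => ‖z‖ ^ n * ‖f z‖) μ :=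
      (continuous_norm.pow n).aestronglyMeasurable.mul hf.1.norm
    have hvm : AEStronglyMeasurable (fun z => ‖z‖ ^ (n + 2) * ‖f z‖) μ :=
      (continuous_norm.pow (n + 2)).aestronglyMeasurable.mul hf.1.norm
    have huint : Integrable (fun z => (‖z‖ ^ n * ‖f z‖) ^ 2) μ := by
      have : (fun z => (‖z‖ ^ n * ‖f z‖) ^ 2) = fun z => ‖z‖ ^ (2 * n) * ‖f z‖ ^ 2 := by
        funext z; ring
      rw [this]; exact hA (2 * n)
    have hvint : Integrable (fun z => (‖z‖ ^ (n + 2) * ‖f z‖) ^ 2) μ := by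
      have : (fun z => (‖z‖ ^ (n + 2) * ‖f z‖) ^ 2) = fun z => ‖z‖ ^ (2 * (n + 2)) * ‖f z‖ ^ 2 := by
        funext z; ring
      rw [this]; exact hA (2 * (n + 2))
    have humem : MemLp (fun z => ‖z‖ ^ n * ‖f z‖) (ENNReal.ofReal 2) μ := by
      rw [show ENNReal.ofReal 2 = 2 by simp]
      exact (memLp_two_iff_integrable_sq hum).2 huint
    have hvmem : MemLp (fun z => ‖z‖ ^ (n + 2) * ‖f z‖) (ENNReal.ofReal 2) μ := by
      rw [show ENNReal.ofReal 2 = 2 by simp]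
      exact (memLp_two_iff_integrable_sq hvm).2 hvint
    have hh := integral_mul_le_Lp_mul_Lq_of_nonneg (by constructor <;> norm_num : Real.HolderConjugate 2 2)
      (Eventually.of_forall fun z => by positivity)
      (Eventually.of_forall fun z => by positivity) humem hvmem
    have hInt1 : ∫ z, (‖z‖ ^ n * ‖f z‖) * (‖z‖ ^ (n + 2) * ‖f z‖) ∂μ = a (n + 1) :=
      integral_congr_ae (Eventually.of_forall fun z => by simp only [ha_def]; ring)
    have hInt2 : ∫ z, (‖z‖ ^ n * ‖f z‖) ^ (2:ℝ) ∂μ = a n :=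
      integral_congr_ae (Eventually.of_forall fun z => by
        simp only [Real.rpow_two]; ring)
    have hInt3 : ∫ z, (‖z‖ ^ (n + 2) * ‖f z‖) ^ (2:ℝ) ∂μ = a (n + 2) :=
      integral_congr_ae (Eventually.of_forall fun z => by
        simp only [Real.rpow_two]; ring)
    rw [hInt1, hInt2, hInt3] at hh
    calc a (n + 1) ^ 2 ≤ ((a n) ^ (1/2:ℝ) * (a (n + 2)) ^ (1/2:ℝ)) ^ 2 :=
          pow_le_pow_left₀ (ha_nonneg _) hh 2
      _ = a n * a (n + 2) := by
          rw [← Real.sqrt_eq_rpow, ← Real.sqrt_eq_rpow, mul_pow,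
            Real.sq_sqrt (ha_nonneg n), Real.sq_sqrt (ha_nonneg (n + 2))]
  -- positivity of all a n
  have apos : ∀ n, 0 < a n := by
    have h0 : 0 < a 0 := by
      have : a 0 = ∫ z, ‖f z‖ ^ 2 ∂μ := by
        norm_num [ha_def]
      rw [this]
      exact lt_of_le_of_ne (integral_nonneg fun z => by positivity) (Ne.symm hf0)
    have h1 : 0 < a 1 := by
      have : a 1 = ∫ z, ‖z‖ ^ 2 * ‖f z‖ ^ 2 ∂μ := by
        norm_num [ha_def]
      rw [this]
      exact lt_of_le_of_ne (integral_nonneg fun z => by positivity) (Ne.symm hNf0)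
    intro n
    induction n using Nat.twoStepInduction with
    | zero => exact h0
    | one => exact h1
    | more n ih1 ih2 =>
      have := hCS n
      nlinarith [ha_nonneg n, ha_nonneg (n + 2)]
  -- the ratio sequence
  set b : ℕ → ℝ := fun n => a (n + 1) / a n with hb_def
  have hb_nonneg : ∀ n, 0 ≤ b n := fun n => div_nonneg (ha_nonneg _) (ha_nonneg _)
  have hbC : ∀ n, b n ≤ C ^ 2 := fun n => (div_le_iff₀ (apos n)).2 (hub n)
  have hb_mono : Monotone b := by
    refine monotone_nat_of_le_succ fun n => ?_
    rw [hb_def]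
    rw [div_le_div_iff₀ (apos n) (apos (n + 1))]
    nlinarith [hCS n]
  have hbdd : BddAbove (Set.range b) := ⟨C ^ 2, by rintro x ⟨n, rfl⟩; exact hbC n⟩
  set L : ℝ := ⨆ n, b n with hL_def
  have hbL : ∀ n, b n ≤ L := fun n => le_ciSup hbdd n
  have hL0 : 0 ≤ L := le_trans (hb_nonneg 0) (hbL 0)
  have hLC : L ≤ C ^ 2 := ciSup_le hbC
  have hbtend : Tendsto b atTop (𝓝 L) := tendsto_atTop_ciSup hb_mono hbdd
  -- growth bound a n ≤ a 0 * L ^ n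
  have hgrow : ∀ n, a n ≤ a 0 * L ^ n := by
    intro n
    induction n with
    | zero => simp
    | succ n ih =>
      have : a (n + 1) = b n * a n := by
        rw [hb_def, div_mul_cancel₀ _ (apos n).ne']
      rw [this, pow_succ]
      calc b n * a n ≤ L * (a 0 * L ^ n) :=
            mul_le_mul (hbL n) ih (ha_nonneg n) hL0
        _ = a 0 * (L ^ n * L) := by ring
  -- lower bound: C ^ 2 ≤ L
  have hCL : C ^ 2 ≤ L := by
    by_contra hlt
    push_neg at hlt
    have hCpos : 0 < C := by nlinarith
    have hsl : Real.sqrt L < C := by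
      have := Real.sqrt_lt_sqrt hL0 hlt
      rwa [Real.sqrt_sq hCpos.le] at this
    set t : ℝ := (Real.sqrt L + C) / 2 with ht_def
    have htpos : 0 < t := by
      have := Real.sqrt_nonneg L
      rw [ht_def]; linarith
    have htL : Real.sqrt L < t := by rw [ht_def]; linarith
    have htC : t < C := by rw [ht_def]; linarith
    have htsq : L < t ^ 2 := by
      nlinarith [Real.sq_sqrt hL0, Real.sqrt_nonneg L]
    -- the set where ‖z‖ > t has positive ν-measure
    have hoE : ENNReal.ofReal t < E := by
      rw [ENNReal.ofReal_lt_iff_lt_toReal htpos.le hEtop, ← hC]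
      exact htC
    have hSmeas : MeasurableSet {z : ℂ | t < ‖z‖} :=
      measurableSet_lt measurable_const measurable_norm
    have hνS : ν {z : ℂ | t < ‖z‖} ≠ 0 := by
      intro h0
      have hae : ∀ᵐ z ∂ν, (fun w : ℂ => (‖w‖₊ : ENNReal)) z ≤ ENNReal.ofReal t := by
        rw [ae_iff]
        have : {z : ℂ | ¬ ((fun w : ℂ => (‖w‖₊ : ENNReal)) z ≤ ENNReal.ofReal t)}
            ⊆ {z : ℂ | t < ‖z‖} := by
          intro z hz
          simp only [Set.mem_setOf_eq, not_le, ← enorm_eq_nnnorm, ← ofReal_norm] at hz ⊢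
          exact (ENNReal.ofReal_lt_ofReal_iff_of_nonneg htpos.le).mp hz
        exact measure_mono_null this h0
      have : E ≤ ENNReal.ofReal t := essSup_le_of_ae_le _ hae
      exact absurd this (not_le.mpr hoE)
    have hνS_top : ν {z : ℂ | t < ‖z‖} ≠ ⊤ := by
      refine ne_top_of_le_ne_top ?_ (measure_mono (Set.subset_univ _))
      rw [hν_def, withDensity_apply _ MeasurableSet.univ, Measure.restrict_univ]
      exact hg_int.lintegral_lt_top.ne
    set c : ℝ := (ν {z : ℂ | t < ‖z‖}).toReal with hc_def
    have hcpos : 0 < c := ENNReal.toReal_pos hνS hνS_top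
    -- ∫ over S of ‖f‖² equals c
    have hSg : ∫ z in {z : ℂ | t < ‖z‖}, ‖f z‖ ^ 2 ∂μ = c := by
      rw [hc_def, hν_def, withDensity_apply _ hSmeas,
        integral_eq_lintegral_of_nonneg_ae (Eventually.of_forall fun z => hg_nonneg z)
          hgm.restrict]
    -- lower bound on a n
    have hlow : ∀ n, t ^ (2 * n) * c ≤ a n := by
      intro n
      have hstep1 : t ^ (2 * n) * c = ∫ z in {z : ℂ | t < ‖z‖}, t ^ (2 * n) * ‖f z‖ ^ 2 ∂μ := by
        rw [integral_const_mul, hSg]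
      rw [hstep1]
      have hstep2 : ∫ z in {z : ℂ | t < ‖z‖}, t ^ (2 * n) * ‖f z‖ ^ 2 ∂μ
          ≤ ∫ z in {z : ℂ | t < ‖z‖}, ‖z‖ ^ (2 * n) * ‖f z‖ ^ 2 ∂μ := by
        refine setIntegral_mono_on ((hg_int.const_mul _).integrableOn)
          ((hA (2 * n)).integrableOn) hSmeas fun z hz => ?_
        have h' : t ≤ ‖z‖ := le_of_lt hz
        gcongr
      refine hstep2.trans ?_
      exact setIntegral_le_integral (hA (2 * n)) (Eventually.of_forall fun z => by positivity)
    -- contradiction via geometric decay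
    have hq : ∀ n, c ≤ a 0 * (L / t ^ 2) ^ n := by
      intro n
      have h1 := (hlow n).trans (hgrow n)
      have ht2 : (0:ℝ) < (t ^ 2) ^ n := by positivity
      rw [div_pow, ← mul_div_assoc, le_div_iff₀ ht2]
      calc c * (t ^ 2) ^ n = t ^ (2 * n) * c := by rw [← pow_mul]; ring
        _ ≤ a 0 * L ^ n := h1
    have hlim : Tendsto (fun n : ℕ => a 0 * (L / t ^ 2) ^ n) atTop (𝓝 0) := by
      have habs : |L / t ^ 2| < 1 := by
        rw [abs_of_nonneg (by positivity), div_lt_one (by positivity)]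
        exact htsq
      simpa using (tendsto_pow_atTop_nhds_zero_of_abs_lt_one habs).const_mul (a 0)
    have := ge_of_tendsto hlim (Eventually.of_forall hq)
    linarith
  have hLeq : L = C ^ 2 := le_antisymm hLC hCL
  -- conclusion
  have hfinal : Tendsto (fun n => Real.sqrt (b n)) atTop (𝓝 C) := by
    have h1 : Tendsto (fun n => Real.sqrt (b n)) atTop (𝓝 (Real.sqrt L)) :=
      (Real.continuous_sqrt.tendsto L).comp hbtend
    rwa [hLeq, Real.sqrt_sq hC0] at h1
  refine hfinal.congr fun n => ?_
  rw [hb_def]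
  rw [Real.sqrt_div (ha_nonneg (n + 1)) (a n)]
end

section
/- Let H be an infinite-dimensional separable Hilbert space and (x_n)_{n∈ℕ} a frame for H. If the sequence obtained by deleting one element x_m is still complete (has dense span), then it is still a frame for H. -/
/-- If `(x_n)` is a frame for an infinite-dimensional separable Hilbert space `H`
and the sequence obtained by deleting one element `x_m` still has dense span, then it is still
a frame for `H`. -/
theorem stmt_6 {H : Type*} [NormedAddCommGroup H] [InnerProductSpace ℂ H] [CompleteSpace H]
    [TopologicalSpace.SeparableSpace H] (hinf : ¬ FiniteDimensional ℂ H)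
    (x : ℕ → H) (B C : ℝ) (hB : 0 < B) (hBC : B ≤ C)
    (hframe : ∀ y : H,
      B * ‖y‖ ^ 2 ≤ ∑' n : ℕ, ‖(inner ℂ y (x n) : ℂ)‖ ^ 2 ∧
      ∑' n : ℕ, ‖(inner ℂ y (x n) : ℂ)‖ ^ 2 ≤ C * ‖y‖ ^ 2)
    (m : ℕ)
    (hcomplete : Dense ((Submodule.span ℂ (x '' {n | n ≠ m}) : Submodule ℂ H) : Set H)) :
    ∃ B' C' : ℝ, 0 < B' ∧ ∀ y : H,
      B' * ‖y‖ ^ 2 ≤ ∑' n : {n : ℕ // n ≠ m}, ‖(inner ℂ y (x n.1) : ℂ)‖ ^ 2 ∧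
      ∑' n : {n : ℕ // n ≠ m}, ‖(inner ℂ y (x n.1) : ℂ)‖ ^ 2 ≤ C' * ‖y‖ ^ 2 := by
  classical
  obtain ⟨u, humem, hud⟩ := Metric.mem_closure_iff.mp (hcomplete (x m)) (Real.sqrt B / 2)
    (by positivity)
  obtain ⟨c, hcsupp, hcsum⟩ := Submodule.mem_span_set.mp humem
  set K : ℝ := ∑ v ∈ c.support, ‖c v‖ ^ 2 with hKdef
  have hK0 : 0 ≤ K := Finset.sum_nonneg fun v _ => by positivity
  refine ⟨B / (2 * (1 + 2 * K)), C, by positivity, ?_⟩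
  intro y
  have hg0 : ∀ n : ℕ, 0 ≤ ‖(inner ℂ y (x n) : ℂ)‖ ^ 2 := fun n => by positivity
  have hsum : Summable fun n : ℕ => ‖(inner ℂ y (x n) : ℂ)‖ ^ 2 := by
    by_cases hy : y = 0
    · subst hy
      simp only [inner_zero_left, norm_zero]
      simpa using summable_zero
    · by_contra hns
      have h0 : ∑' n : ℕ, ‖(inner ℂ y (x n) : ℂ)‖ ^ 2 = 0 := tsum_eq_zero_of_not_summable hns
      have h1 := (hframe y).1
      rw [h0] at h1
      have hy' : 0 < ‖y‖ := norm_pos_iff.mpr hy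
      nlinarith [mul_pos hB (pow_pos hy' 2)]
  have hsub : Summable fun n : {n : ℕ // n ≠ m} => ‖(inner ℂ y (x n.1) : ℂ)‖ ^ 2 :=
    hsum.subtype _
  set S' : ℝ := ∑' n : {n : ℕ // n ≠ m}, ‖(inner ℂ y (x n.1) : ℂ)‖ ^ 2 with hS'def
  have hS'0 : 0 ≤ S' := tsum_nonneg fun n => hg0 _
  have hind : S' = ∑' n : ℕ, Set.indicator {n : ℕ | n ≠ m}
      (fun n => ‖(inner ℂ y (x n) : ℂ)‖ ^ 2) n :=
    tsum_subtype {n : ℕ | n ≠ m} (fun n => ‖(inner ℂ y (x n) : ℂ)‖ ^ 2)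
  have hS'le : S' ≤ ∑' n : ℕ, ‖(inner ℂ y (x n) : ℂ)‖ ^ 2 := by
    rw [hind]
    exact Summable.tsum_le_tsum (fun n => Set.indicator_le_self' (fun n _ => hg0 n) n)
      (hsum.indicator _) hsum
  have hsplit : ∑' n : ℕ, ‖(inner ℂ y (x n) : ℂ)‖ ^ 2 = ‖(inner ℂ y (x m) : ℂ)‖ ^ 2 + S' := by
    rw [Summable.tsum_eq_add_tsum_ite hsum m, hind]
    congr 1
    apply tsum_congr
    intro n
    by_cases h : n = m <;> simp [Set.indicator, h]
  have hchoice : ∀ v ∈ c.support, ∃ n : ℕ, n ≠ m ∧ x n = v := by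
    intro v hv
    obtain ⟨n, hn, hxn⟩ := hcsupp hv
    exact ⟨n, hn, hxn⟩
  choose idx hidx1 hidx2 using hchoice
  set e : {v // v ∈ c.support} → {n : ℕ // n ≠ m} :=
    fun a => ⟨idx a.1 a.2, hidx1 a.1 a.2⟩ with hedef
  have einj : Function.Injective e := by
    intro a b hab
    rw [Subtype.ext_iff] at hab
    have hxe : x (idx a.1 a.2) = x (idx b.1 b.2) := congrArg x hab
    apply Subtype.ext
    rw [← hidx2 a.1 a.2, ← hidx2 b.1 b.2, hxe]
  have hfin : ∑ v ∈ c.support, ‖(inner ℂ y v : ℂ)‖ ^ 2 ≤ S' := by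
    have h1 : ∑ v ∈ c.support, ‖(inner ℂ y v : ℂ)‖ ^ 2
        = ∑ a ∈ c.support.attach.map ⟨e, einj⟩, ‖(inner ℂ y (x a.1) : ℂ)‖ ^ 2 := by
      rw [Finset.sum_map]
      rw [← Finset.sum_attach c.support (fun v => ‖(inner ℂ y v : ℂ)‖ ^ 2)]
      apply Finset.sum_congr rfl
      intro a _
      simp only [Function.Embedding.coeFn_mk, hedef]
      rw [hidx2 a.1 a.2]
    rw [h1]
    exact Summable.sum_le_tsum _ (fun i _ => hg0 _) hsub
  have hu : u = ∑ v ∈ c.support, c v • v := by rw [← hcsum]; rfl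
  have hinneru : ‖(inner ℂ y u : ℂ)‖ ^ 2 ≤ K * S' := by
    have h2 : (inner ℂ y u : ℂ) = ∑ v ∈ c.support, c v * inner ℂ y v := by
      rw [hu, inner_sum]
      exact Finset.sum_congr rfl fun v _ => inner_smul_right _ _ _
    have h3 : ‖(inner ℂ y u : ℂ)‖ ≤ ∑ v ∈ c.support, ‖c v‖ * ‖(inner ℂ y v : ℂ)‖ := by
      rw [h2]
      refine (norm_sum_le _ _).trans_eq ?_
      exact Finset.sum_congr rfl fun v _ => norm_mul _ _
    have h4 := Finset.sum_mul_sq_le_sq_mul_sq c.support (fun v => ‖c v‖)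
      (fun v => ‖(inner ℂ y v : ℂ)‖)
    have h5 : 0 ≤ ∑ v ∈ c.support, ‖c v‖ * ‖(inner ℂ y v : ℂ)‖ :=
      Finset.sum_nonneg fun v _ => mul_nonneg (norm_nonneg _) (norm_nonneg _)
    have h6 : ∑ v ∈ c.support, ‖(inner ℂ y v : ℂ)‖ ^ 2 ≤ S' := hfin
    nlinarith [norm_nonneg (inner ℂ y u : ℂ)]
  have hxmest : ‖(inner ℂ y (x m) : ℂ)‖ ^ 2 ≤ 2 * K * S' + B / 2 * ‖y‖ ^ 2 := by
    have hdist : ‖x m - u‖ < Real.sqrt B / 2 := by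
      rw [← dist_eq_norm]; exact hud
    have h5 : (inner ℂ y (x m) : ℂ) = inner ℂ y u + inner ℂ y (x m - u) := by
      rw [← inner_add_right]
      congr 1
      abel
    have h6 : ‖(inner ℂ y (x m) : ℂ)‖ ≤ ‖(inner ℂ y u : ℂ)‖ + ‖y‖ * ‖x m - u‖ := by
      rw [h5]
      refine (norm_add_le _ _).trans ?_
      gcongr
      exact norm_inner_le_norm _ _
    have hsB : Real.sqrt B ^ 2 = B := Real.sq_sqrt hB.le
    have hB4 : ‖x m - u‖ ^ 2 ≤ B / 4 := by
      nlinarith [norm_nonneg (x m - u), Real.sqrt_nonneg B]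
    have hD : (‖y‖ * ‖x m - u‖) ^ 2 ≤ B / 4 * ‖y‖ ^ 2 := by
      have := mul_le_mul_of_nonneg_left hB4 (sq_nonneg ‖y‖)
      nlinarith
    have h7 : ‖(inner ℂ y (x m) : ℂ)‖ * ‖(inner ℂ y (x m) : ℂ)‖ ≤
        (‖(inner ℂ y u : ℂ)‖ + ‖y‖ * ‖x m - u‖) * (‖(inner ℂ y u : ℂ)‖ + ‖y‖ * ‖x m - u‖) :=
      mul_le_mul h6 h6 (norm_nonneg _) (by positivity)
    nlinarith [hinneru, hD, sq_nonneg (‖(inner ℂ y u : ℂ)‖ - ‖y‖ * ‖x m - u‖)]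
  have h1 := (hframe y).1
  have h2 := (hframe y).2
  clear_value S' K
  clear e hinneru hfin hu einj hedef hidx1 hidx2 idx hsub hind hcsum hcsupp hKdef hS'def
  constructor
  · rw [hsplit] at h1
    have hineq : B / 2 * ‖y‖ ^ 2 ≤ (1 + 2 * K) * S' := by nlinarith
    rw [div_mul_eq_mul_div, div_le_iff₀ (by positivity)]
    nlinarith
  · exact hS'le.trans h2
end

section
/- Let A be a bounded invertible normal operator on a Hilbert space H, S a finite subset of H with S ∩ ker(A) = ∅, and suppose {A^n x/‖A^n x‖ : n ≥ 1, x ∈ S} is a frame for H. Then {A^{n−1} x/‖A^n x‖ : n ≥ 1, x ∈ S} is a Bessel sequence in H. -/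
/-- Let `A` be a bounded invertible normal operator, `S` a finite subset of `H`
with `S ∩ ker A = ∅`, and suppose `{A^n x/‖A^n x‖ : n ≥ 1, x ∈ S}` is a frame for `H`.
Then `{A^{n-1} x/‖A^n x‖ : n ≥ 1, x ∈ S}` is a Bessel sequence in `H`. -/
theorem stmt_7 {H : Type*} [NormedAddCommGroup H] [InnerProductSpace ℂ H] [CompleteSpace H]
    (A : H →L[ℂ] H) (hA : IsStarNormal A) (hinv : Function.Bijective A)
    (S : Finset H) (hS : ∀ x ∈ S, A x ≠ 0)
    (B C : ℝ) (hB : 0 < B)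
    (hframe : ∀ y : H,
      B * ‖y‖ ^ 2 ≤
        (∑' n : ℕ, ∑ x ∈ S, ‖(inner ℂ y ((‖(A ^ (n + 1)) x‖)⁻¹ • (A ^ (n + 1)) x) : ℂ)‖ ^ 2) ∧
      (∑' n : ℕ, ∑ x ∈ S, ‖(inner ℂ y ((‖(A ^ (n + 1)) x‖)⁻¹ • (A ^ (n + 1)) x) : ℂ)‖ ^ 2) ≤
        C * ‖y‖ ^ 2) :
    ∃ D : ℝ, ∀ y : H,
      ∑' n : ℕ, ∑ x ∈ S, ‖(inner ℂ y ((‖(A ^ (n + 1)) x‖)⁻¹ • (A ^ n) x) : ℂ)‖ ^ 2 ≤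
        D * ‖y‖ ^ 2 := by
  obtain ⟨hinj, hsurj⟩ := hinv
  let e : H ≃L[ℂ] H := ContinuousLinearEquiv.ofBijective A
    (LinearMap.ker_eq_bot_of_injective hinj) (LinearMap.range_eq_top.mpr hsurj)
  let T : H →L[ℂ] H := ContinuousLinearMap.adjoint (e.symm : H →L[ℂ] H)
  refine ⟨max C 0 * ‖T‖ ^ 2, fun y => ?_⟩
  have key : ∀ (n : ℕ) (x : H),
      (inner ℂ y ((‖(A ^ (n + 1)) x‖)⁻¹ • (A ^ n) x) : ℂ) =
      inner ℂ (T y) ((‖(A ^ (n + 1)) x‖)⁻¹ • (A ^ (n + 1)) x) := by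
    intro n x
    rw [ContinuousLinearMap.adjoint_inner_left]
    congr 1
    rw [ContinuousLinearMap.map_smul_of_tower]
    congr 1
    symm
    show e.symm ((A ^ (n + 1)) x) = (A ^ n) x
    rw [e.symm_apply_eq]
    have : e ((A ^ n) x) = A ((A ^ n) x) := rfl
    rw [this, pow_succ', ContinuousLinearMap.mul_apply]
  have hsum : ∑' n : ℕ, ∑ x ∈ S, ‖(inner ℂ y ((‖(A ^ (n + 1)) x‖)⁻¹ • (A ^ n) x) : ℂ)‖ ^ 2
      = ∑' n : ℕ, ∑ x ∈ S, ‖(inner ℂ (T y) ((‖(A ^ (n + 1)) x‖)⁻¹ • (A ^ (n + 1)) x) : ℂ)‖ ^ 2 := by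
    congr 1; funext n; exact Finset.sum_congr rfl (fun x _ => by rw [key])
  rw [hsum]
  have h1 := (hframe (T y)).2
  have h2 : ‖T y‖ ≤ ‖T‖ * ‖y‖ := T.le_opNorm y
  have h3 : (0:ℝ) ≤ ‖T y‖ := norm_nonneg _
  have h4 : (0:ℝ) ≤ ‖y‖ := norm_nonneg _
  have h5 : C ≤ max C 0 := le_max_left _ _
  have h6 : (0:ℝ) ≤ max C 0 := le_max_right _ _
  have h7 : ‖T y‖ ^ 2 ≤ (‖T‖ * ‖y‖) ^ 2 := pow_le_pow_left₀ h3 h2 2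
  have hA1 : C * ‖T y‖ ^ 2 ≤ max C 0 * ‖T y‖ ^ 2 :=
    mul_le_mul_of_nonneg_right h5 (sq_nonneg _)
  have hA2 : max C 0 * ‖T y‖ ^ 2 ≤ max C 0 * (‖T‖ * ‖y‖) ^ 2 :=
    mul_le_mul_of_nonneg_left h7 h6
  have hmp : (‖T‖ * ‖y‖) ^ 2 = ‖T‖ ^ 2 * ‖y‖ ^ 2 := mul_pow _ _ _
  rw [mul_assoc]
  rw [hmp] at hA2
  linarith
end

section
/- Let A be a bounded normal operator on a Hilbert space H and x ∈ H with Ax ≠ 0. If {A^n x/‖A^n x‖ : n ≥ 1} is a frame for H with surjective synthesis (i.e., every y ∈ H equals Σ_n c_n A^n x/‖A^n x‖ for some ℓ² sequence (c_n) with norm-convergent sum), then A is surjective. -/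
set_option maxHeartbeats 1600000 in
open ContinuousLinearMap in
/-- Let `A` be a bounded normal operator and `x ∈ H` with `Ax ≠ 0`.  If
`{A^n x/‖A^n x‖ : n ≥ 1}` is a frame for `H` with surjective synthesis (every `y ∈ H` is a
norm-convergent sum `Σ c_n A^n x/‖A^n x‖` with `(c_n) ∈ ℓ²`), then `A` is surjective. -/
theorem stmt_8 {H : Type*} [NormedAddCommGroup H] [InnerProductSpace ℂ H] [CompleteSpace H]
    (A : H →L[ℂ] H) (hA : IsStarNormal A) (x : H) (hx : A x ≠ 0)
    (B C : ℝ) (hB : 0 < B)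
    (hframe : ∀ y : H,
      B * ‖y‖ ^ 2 ≤ (∑' n : ℕ, ‖(inner ℂ y ((‖(A ^ (n + 1)) x‖)⁻¹ • (A ^ (n + 1)) x) : ℂ)‖ ^ 2) ∧
      (∑' n : ℕ, ‖(inner ℂ y ((‖(A ^ (n + 1)) x‖)⁻¹ • (A ^ (n + 1)) x) : ℂ)‖ ^ 2) ≤ C * ‖y‖ ^ 2)
    (hsynth : ∀ y : H, ∃ c : ℕ → ℂ, Summable (fun n => ‖c n‖ ^ 2) ∧
      HasSum (fun n : ℕ => c n • (‖(A ^ (n + 1)) x‖)⁻¹ • (A ^ (n + 1)) x) y) :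
    Function.Surjective A := by
  classical
  have hx0 : x ≠ 0 := fun h => hx (by simp [h])
  have hAx : (0:ℝ) < ‖A x‖ := norm_pos_iff.mpr hx
  have hxn : (0:ℝ) < ‖x‖ := norm_pos_iff.mpr hx0
  -- ‖A† w‖ = ‖A w‖
  have hadj : ∀ w : H, ‖(ContinuousLinearMap.adjoint A) w‖ = ‖A w‖ := by
    intro w
    have hcomm : ContinuousLinearMap.adjoint A * A = A * ContinuousLinearMap.adjoint A := by
      simpa [ContinuousLinearMap.star_eq_adjoint] using hA.star_comm_self.eq
    have hinner : (inner ℂ ((ContinuousLinearMap.adjoint A) w) ((ContinuousLinearMap.adjoint A) w) : ℂ)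
        = inner ℂ (A w) (A w) := by
      calc (inner ℂ ((ContinuousLinearMap.adjoint A) w) ((ContinuousLinearMap.adjoint A) w) : ℂ)
          = inner ℂ w (A ((ContinuousLinearMap.adjoint A) w)) := adjoint_inner_left A _ w
        _ = inner ℂ w ((A * ContinuousLinearMap.adjoint A) w) := rfl
        _ = inner ℂ w ((ContinuousLinearMap.adjoint A * A) w) := by rw [hcomm]
        _ = inner ℂ w ((ContinuousLinearMap.adjoint A) (A w)) := rfl
        _ = (inner ℂ (A w) (A w) : ℂ) := adjoint_inner_right A w _
    have h2 : (‖(ContinuousLinearMap.adjoint A) w‖:ℝ)^2 = (‖A w‖:ℝ)^2 := by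
      rw [← inner_self_eq_norm_sq (𝕜 := ℂ), ← inner_self_eq_norm_sq (𝕜 := ℂ), hinner]
    nlinarith [norm_nonneg ((ContinuousLinearMap.adjoint A) w), norm_nonneg (A w)]
  have stepEq : ∀ m : ℕ, (A^(m+1)) x = A ((A^m) x) := by
    intro m; rw [pow_succ']; rfl
  -- ratio monotonicity
  have ratio : ∀ n : ℕ, (A^(n+1)) x ≠ 0 → ‖(A^n) x‖ * ‖A x‖ ≤ ‖(A^(n+1)) x‖ * ‖x‖ := by
    have logconv : ∀ z : H, ‖A z‖^2 ≤ ‖A (A z)‖ * ‖z‖ := by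
      intro z
      have h1 : (‖A z‖:ℝ)^2 = Complex.re (inner ℂ (A z) (A z) : ℂ) :=
        (inner_self_eq_norm_sq (𝕜 := ℂ) _).symm
      have h2 : (inner ℂ (A z) (A z) : ℂ) = inner ℂ ((ContinuousLinearMap.adjoint A) (A z)) z :=
        (adjoint_inner_left A z (A z)).symm
      calc ‖A z‖^2 = Complex.re (inner ℂ ((ContinuousLinearMap.adjoint A) (A z)) z : ℂ) := by
            rw [h1, h2]
        _ ≤ ‖(inner ℂ ((ContinuousLinearMap.adjoint A) (A z)) z : ℂ)‖ := Complex.re_le_norm _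
        _ ≤ ‖(ContinuousLinearMap.adjoint A) (A z)‖ * ‖z‖ := norm_inner_le_norm _ _
        _ = ‖A (A z)‖ * ‖z‖ := by rw [hadj]
    intro n
    induction n with
    | zero => intro _; simp [pow_one, mul_comm]
    | succ n ih =>
      intro h
      have hsucc : (A^(n+1)) x ≠ 0 := by
        intro h0; exact h (by rw [stepEq (n+1), h0, map_zero])
      have ihh := ih hsucc
      have lc := logconv ((A^n) x)
      rw [← stepEq n, ← stepEq (n+1)] at lc
      have pos : (0:ℝ) < ‖(A^(n+1)) x‖ := norm_pos_iff.mpr hsucc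
      nlinarith [mul_le_mul_of_nonneg_left ihh (norm_nonneg ((A^(n+1+1)) x)),
        mul_le_mul_of_nonneg_right lc (norm_nonneg (A x)), pos, norm_nonneg (A x),
        norm_nonneg x]
  -- notation
  set u : ℕ → H := fun n => (‖(A ^ (n + 1)) x‖)⁻¹ • (A ^ (n + 1)) x with hu
  set v : ℕ → H := fun n => (‖(A ^ (n + 1)) x‖)⁻¹ • (A ^ n) x with hv
  set g : H → ℕ → ℝ := fun y n => ‖(inner ℂ y (u n) : ℂ)‖ ^ 2 with hg
  have hg0 : ∀ y n, 0 ≤ g y n := fun y n => by positivity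
  have hgsum : ∀ y : H, Summable (g y) := by
    intro y
    by_cases hy : y = 0
    · simpa [hg, hy] using summable_zero
    · have h1 := (hframe y).1
      have hyn : (0:ℝ) < ‖y‖ := norm_pos_iff.mpr hy
      have hpos : (0:ℝ) < ∑' n, g y n := lt_of_lt_of_le (by positivity) h1
      by_contra hns
      rw [tsum_eq_zero_of_not_summable hns] at hpos
      exact lt_irrefl _ hpos
  have hC : (0:ℝ) < C := by
    have h1 := (hframe x).1
    have h2 := (hframe x).2
    nlinarith [h1.trans h2, mul_pos hB (pow_pos hxn 2), pow_pos hxn 2]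
  set K : ℝ := ‖x‖ * ‖A x‖⁻¹ with hKdef
  have hK : (0:ℝ) < K := by positivity
  -- real smul inner
  have innerR : ∀ (y w : H) (r : ℝ), ‖(inner ℂ y (r • w) : ℂ)‖ = |r| * ‖(inner ℂ y w : ℂ)‖ := by
    intro y w r
    rw [RCLike.real_smul_eq_coe_smul (K := ℂ), inner_smul_right]
    simp [Complex.norm_real]
  -- the dominating sequence
  set hfun : H → ℕ → ℝ := fun y n => Nat.casesOn n (‖y‖^2) (g y) with hhfun
  have hfun0 : ∀ y n, 0 ≤ hfun y n := by
    intro y n; cases n with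
    | zero => show (0:ℝ) ≤ ‖y‖^2; positivity
    | succ m => exact hg0 y m
  have bound1 : ∀ (y : H) (n : ℕ), ‖(inner ℂ y (v n) : ℂ)‖^2 ≤ K^2 * hfun y n := by
    intro y n
    cases n with
    | zero =>
      have hv0 : ‖v 0‖ = K := by
        have e : v 0 = (‖(A^(0+1)) x‖)⁻¹ • x := by simp [hv]
        rw [e, norm_smul, norm_inv, norm_norm, hKdef]
        simp [pow_one, mul_comm]
      have h1 : ‖(inner ℂ y (v 0) : ℂ)‖ ≤ ‖y‖ * K := by
        calc ‖(inner ℂ y (v 0) : ℂ)‖ ≤ ‖y‖ * ‖v 0‖ := norm_inner_le_norm _ _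
          _ = ‖y‖ * K := by rw [hv0]
      have h0 : (0:ℝ) ≤ ‖(inner ℂ y (v 0) : ℂ)‖ := norm_nonneg _
      calc ‖(inner ℂ y (v 0) : ℂ)‖^2 ≤ (‖y‖ * K)^2 := by nlinarith [mul_nonneg (norm_nonneg y) (le_of_lt hK)]
        _ = K^2 * hfun y 0 := by show (‖y‖ * K)^2 = K^2 * ‖y‖^2; ring
    | succ m =>
      by_cases hz1 : (A^(m+1)) x = 0
      · have : v (m+1) = 0 := by
          show ‖(A^(m+1+1)) x‖⁻¹ • (A^(m+1)) x = 0
          rw [hz1, smul_zero]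
        rw [this]
        simpa using mul_nonneg (sq_nonneg K) (hfun0 y (m+1))
      · by_cases hz2 : (A^(m+1+1)) x = 0
        · have : v (m+1) = 0 := by
            show ‖(A^(m+1+1)) x‖⁻¹ • (A^(m+1)) x = 0
            rw [hz2, norm_zero, inv_zero, zero_smul]
          rw [this]
          simpa using mul_nonneg (sq_nonneg K) (hfun0 y (m+1))
        · have hn1 : (0:ℝ) < ‖(A^(m+1)) x‖ := norm_pos_iff.mpr hz1
          have hn2 : (0:ℝ) < ‖(A^(m+1+1)) x‖ := norm_pos_iff.mpr hz2
          set r : ℝ := ‖(A^(m+1)) x‖ * ‖(A^(m+1+1)) x‖⁻¹ with hrdef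
          have hr0 : (0:ℝ) ≤ r := by positivity
          have hrel : v (m+1) = r • u m := by
            simp only [hv, hu, hrdef, smul_smul]
            congr 1
            field_simp
          have hrK : r ≤ K := by
            have hr := ratio (m+1) hz2
            rw [hrdef, hKdef, ← div_eq_mul_inv, ← div_eq_mul_inv, div_le_div_iff₀ hn2 hAx]
            nlinarith [hr]
          have h1 : ‖(inner ℂ y (v (m+1)) : ℂ)‖ = r * ‖(inner ℂ y (u m) : ℂ)‖ := by
            rw [hrel, innerR, abs_of_nonneg hr0]
          rw [h1]
          have h2 : (0:ℝ) ≤ ‖(inner ℂ y (u m) : ℂ)‖ := norm_nonneg _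
          have hsq : r^2 ≤ K^2 := by nlinarith [hrK, hr0]
          calc (r * ‖(inner ℂ y (u m) : ℂ)‖)^2 = r^2 * ‖(inner ℂ y (u m) : ℂ)‖^2 := by ring
            _ ≤ K^2 * ‖(inner ℂ y (u m) : ℂ)‖^2 := mul_le_mul_of_nonneg_right hsq (sq_nonneg _)
            _ = K^2 * hfun y (m+1) := rfl
  have hfunsum : ∀ y : H, Summable (hfun y) := by
    intro y
    have : Summable (fun n => hfun y (n + 1)) := hgsum y
    exact (summable_nat_add_iff 1).mp this
  have hfuntsum : ∀ y : H, (∑' n, hfun y n) ≤ (1 + C) * ‖y‖^2 := by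
    intro y
    rw [Summable.tsum_eq_zero_add (hfunsum y)]
    have h2 := (hframe y).2
    have e1 : (fun n => hfun y (n+1)) = g y := rfl
    rw [e1]
    have e2 : hfun y 0 = ‖y‖^2 := rfl
    rw [e2]
    nlinarith [h2]
  set D : ℝ := K^2 * (1 + C) with hDdef
  have hD : (0:ℝ) < D := by positivity
  -- Bessel bound for finite sums
  have bessel : ∀ (y : H) (F : Finset ℕ), (∑ n ∈ F, ‖(inner ℂ y (v n) : ℂ)‖^2) ≤ D * ‖y‖^2 := by
    intro y F
    calc (∑ n ∈ F, ‖(inner ℂ y (v n) : ℂ)‖^2) ≤ ∑ n ∈ F, K^2 * hfun y n :=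
          Finset.sum_le_sum (fun n _ => bound1 y n)
      _ = K^2 * ∑ n ∈ F, hfun y n := by rw [Finset.mul_sum]
      _ ≤ K^2 * ∑' n, hfun y n := by
          refine mul_le_mul_of_nonneg_left ?_ (by positivity)
          exact Summable.sum_le_tsum F (fun n _ => hfun0 y n) (hfunsum y)
      _ ≤ K^2 * ((1 + C) * ‖y‖^2) := by
          refine mul_le_mul_of_nonneg_left (hfuntsum y) (by positivity)
      _ = D * ‖y‖^2 := by rw [hDdef]; ring
  -- synthesis bound
  have synthBound : ∀ (c : ℕ → ℂ) (F : Finset ℕ),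
      ‖∑ n ∈ F, c n • v n‖^2 ≤ D * ∑ n ∈ F, ‖c n‖^2 := by
    intro c F
    set s : H := ∑ n ∈ F, c n • v n with hs
    by_cases hs0 : s = 0
    · rw [hs0]
      simp only [norm_zero]
      have : (0:ℝ) ≤ ∑ n ∈ F, ‖c n‖^2 := Finset.sum_nonneg (fun n _ => by positivity)
      nlinarith
    · have hsn : (0:ℝ) < ‖s‖ := norm_pos_iff.mpr hs0
      have h1 : (inner ℂ s s : ℂ) = ∑ n ∈ F, c n * inner ℂ s (v n) := by
        rw [hs]
        rw [inner_sum]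
        exact Finset.sum_congr rfl (fun n _ => inner_smul_right _ _ _)
      have h2 : ‖s‖^2 ≤ ∑ n ∈ F, ‖c n‖ * ‖(inner ℂ s (v n) : ℂ)‖ := by
        calc ‖s‖^2 = Complex.re (inner ℂ s s : ℂ) := (inner_self_eq_norm_sq (𝕜 := ℂ) _).symm
          _ ≤ ‖(inner ℂ s s : ℂ)‖ := Complex.re_le_norm _
          _ = ‖∑ n ∈ F, c n * inner ℂ s (v n)‖ := by rw [h1]
          _ ≤ ∑ n ∈ F, ‖c n * inner ℂ s (v n)‖ := norm_sum_le _ _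
          _ = ∑ n ∈ F, ‖c n‖ * ‖(inner ℂ s (v n) : ℂ)‖ := by
              exact Finset.sum_congr rfl (fun n _ => norm_mul _ _)
      have h3 : (∑ n ∈ F, ‖c n‖ * ‖(inner ℂ s (v n) : ℂ)‖)^2 ≤
          (∑ n ∈ F, ‖c n‖^2) * (∑ n ∈ F, ‖(inner ℂ s (v n) : ℂ)‖^2) :=
        Finset.sum_mul_sq_le_sq_mul_sq F _ _
      have h4 := bessel s F
      have h5 : (0:ℝ) ≤ ∑ n ∈ F, ‖c n‖^2 := Finset.sum_nonneg (fun n _ => by positivity)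
      have h6 : (0:ℝ) ≤ ∑ n ∈ F, ‖c n‖ * ‖(inner ℂ s (v n) : ℂ)‖ :=
        Finset.sum_nonneg (fun n _ => by positivity)
      have ha : (0:ℝ) < ‖s‖^2 := pow_pos hsn 2
      have e1 : (‖s‖^2)^2 ≤ (∑ n ∈ F, ‖c n‖ * ‖(inner ℂ s (v n) : ℂ)‖)^2 :=
        pow_le_pow_left₀ (le_of_lt ha) h2 2
      have e2 : (∑ n ∈ F, ‖c n‖^2) * (∑ n ∈ F, ‖(inner ℂ s (v n) : ℂ)‖^2)
          ≤ (∑ n ∈ F, ‖c n‖^2) * (D * ‖s‖^2) := mul_le_mul_of_nonneg_left h4 h5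
      nlinarith [e1, h3, e2, ha]
  -- main argument
  intro y
  obtain ⟨c, hc2, hcy⟩ := hsynth y
  have hsummable : Summable (fun n => c n • v n) := by
    rw [summable_iff_vanishing_norm]
    intro ε hε
    have hε2 : (0:ℝ) < ε^2 / D := by positivity
    obtain ⟨s, hsv⟩ := summable_iff_vanishing_norm.mp hc2 (ε^2 / D) hε2
    refine ⟨s, fun t ht => ?_⟩
    have h1 := synthBound c t
    have h2 := hsv t ht
    have h3 : ‖∑ n ∈ t, ‖c n‖^2‖ = ∑ n ∈ t, ‖c n‖^2 := by
      rw [Real.norm_eq_abs, abs_of_nonneg (Finset.sum_nonneg (fun n _ => by positivity))]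
    rw [h3] at h2
    have h4 : ‖∑ n ∈ t, c n • v n‖^2 < ε^2 := by
      calc ‖∑ n ∈ t, c n • v n‖^2 ≤ D * ∑ n ∈ t, ‖c n‖^2 := h1
        _ < D * (ε^2 / D) := by exact mul_lt_mul_of_pos_left h2 hD
        _ = ε^2 := by field_simp
    exact lt_of_pow_lt_pow_left₀ 2 (le_of_lt hε) h4
  set z : H := ∑' n, c n • v n with hz
  refine ⟨z, ?_⟩
  have hzs : HasSum (fun n => c n • v n) z := hsummable.hasSum
  have h1 : HasSum (fun n => A (c n • v n)) (A z) := hzs.mapL A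
  have h2 : ∀ n, A (c n • v n) = c n • (‖(A ^ (n + 1)) x‖)⁻¹ • (A ^ (n + 1)) x := by
    intro n
    rw [hv]
    simp only
    rw [map_smul, map_smul_of_tower, ← stepEq n]
  rw [funext h2] at h1
  exact h1.unique hcy
end

section
/- Let A be a bounded normal operator on a Hilbert space H. If A is injective with dense range and {A^n x/‖A^n x‖ : n ≥ 1, x ∈ S} is a frame for H (S finite, S ∩ ker A = ∅), then for every integer K ≥ 1 the truncated system {A^n x/‖A^n x‖ : n ≥ K, x ∈ S} is also a frame for H. -/
set_option linter.unusedSectionVars false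
set_option maxHeartbeats 1000000

section Aux

variable {H : Type*} [NormedAddCommGroup H] [InnerProductSpace ℂ H] [CompleteSpace H]

lemma stmt9_pow_inj (A : H →L[ℂ] H) (hinj : Function.Injective A) (m : ℕ) :
    Function.Injective (A ^ m) := by
  induction m with
  | zero => simpa [pow_zero] using Function.injective_id
  | succ n ih =>
    intro a b hab
    simp only [pow_succ, ContinuousLinearMap.mul_apply] at hab
    exact hinj (ih hab)

lemma stmt9_pow_normal (A : H →L[ℂ] H) (hA : IsStarNormal A) (m : ℕ) :
    IsStarNormal (A ^ m) :=
  ⟨by rw [star_pow]; exact hA.star_comm_self.pow_pow m m⟩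

lemma stmt9_adj_norm (M : H →L[ℂ] H) (hM : IsStarNormal M) (w : H) :
    ‖(ContinuousLinearMap.adjoint M) w‖ = ‖M w‖ := by
  have hc : M ((ContinuousLinearMap.adjoint M) w) = (ContinuousLinearMap.adjoint M) (M w) := by
    have h := hM.star_comm_self
    rw [ContinuousLinearMap.star_eq_adjoint] at h
    calc M ((ContinuousLinearMap.adjoint M) w)
        = (M * ContinuousLinearMap.adjoint M) w := rfl
      _ = (ContinuousLinearMap.adjoint M * M) w := by rw [h]
      _ = (ContinuousLinearMap.adjoint M) (M w) := rfl
  have h1 : (inner ℂ ((ContinuousLinearMap.adjoint M) w) ((ContinuousLinearMap.adjoint M) w) : ℂ)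
      = inner ℂ (M w) (M w) := by
    rw [ContinuousLinearMap.adjoint_inner_left, hc, ContinuousLinearMap.adjoint_inner_right]
  rw [inner_self_eq_norm_sq_to_K, inner_self_eq_norm_sq_to_K] at h1
  have h2 : ‖(ContinuousLinearMap.adjoint M) w‖ ^ 2 = ‖M w‖ ^ 2 := by exact_mod_cast h1
  calc ‖(ContinuousLinearMap.adjoint M) w‖
      = Real.sqrt (‖(ContinuousLinearMap.adjoint M) w‖ ^ 2) := (Real.sqrt_sq (norm_nonneg _)).symm
    _ = Real.sqrt (‖M w‖ ^ 2) := by rw [h2]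
    _ = ‖M w‖ := Real.sqrt_sq (norm_nonneg _)

end Aux

/-- Let `A` be a bounded normal operator on an infinite-dimensional separable
Hilbert space, injective with dense range, `S` finite with `S ∩ ker A = ∅`, and suppose
`{A^n x/‖A^n x‖ : n ≥ 1, x ∈ S}` is a frame for `H`.  Then for every `K ≥ 1` the truncated
system `{A^n x/‖A^n x‖ : n ≥ K, x ∈ S}` is also a frame for `H`. -/
theorem stmt_9 {H : Type*} [NormedAddCommGroup H] [InnerProductSpace ℂ H] [CompleteSpace H]
    [TopologicalSpace.SeparableSpace H] (hinf : ¬ FiniteDimensional ℂ H)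
    (A : H →L[ℂ] H) (hA : IsStarNormal A)
    (hinj : Function.Injective A) (hdr : DenseRange A)
    (S : Finset H) (hS : ∀ x ∈ S, A x ≠ 0)
    (B C : ℝ) (hB : 0 < B)
    (hframe : ∀ y : H,
      B * ‖y‖ ^ 2 ≤
        (∑' n : ℕ, ∑ x ∈ S, ‖(inner ℂ y ((‖(A ^ (n + 1)) x‖)⁻¹ • (A ^ (n + 1)) x) : ℂ)‖ ^ 2) ∧
      (∑' n : ℕ, ∑ x ∈ S, ‖(inner ℂ y ((‖(A ^ (n + 1)) x‖)⁻¹ • (A ^ (n + 1)) x) : ℂ)‖ ^ 2) ≤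
        C * ‖y‖ ^ 2) :
    ∀ K : ℕ, 1 ≤ K → ∃ B' C' : ℝ, 0 < B' ∧ ∀ y : H,
      B' * ‖y‖ ^ 2 ≤
        (∑' n : ℕ, ∑ x ∈ S, ‖(inner ℂ y ((‖(A ^ (n + K)) x‖)⁻¹ • (A ^ (n + K)) x) : ℂ)‖ ^ 2) ∧
      (∑' n : ℕ, ∑ x ∈ S, ‖(inner ℂ y ((‖(A ^ (n + K)) x‖)⁻¹ • (A ^ (n + K)) x) : ℂ)‖ ^ 2) ≤
        C' * ‖y‖ ^ 2 := by
  intro K hK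
  obtain ⟨k, rfl⟩ : ∃ k, K = k + 1 := ⟨K - 1, by omega⟩
  classical
  -- the truncated system and its partial sums
  let g : H → ℕ → ℝ := fun y m => ∑ x ∈ S, ‖(inner ℂ y ((‖(A ^ m) x‖)⁻¹ • (A ^ m) x) : ℂ)‖ ^ 2
  let t : H → ℝ := fun y => ∑' n : ℕ, g y (n + (k + 1))
  have hg_nonneg : ∀ y m, 0 ≤ g y m := fun y m => Finset.sum_nonneg fun x _ => by positivity
  -- nonvanishing of powers on S
  have hANz : ∀ m : ℕ, ∀ x ∈ S, (A ^ m) x ≠ 0 := by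
    intro m x hx h0
    have hx0 : x ≠ 0 := fun h => hS x hx (by simp [h])
    exact hx0 (stmt9_pow_inj A hinj m (by simpa using h0))
  -- summability of the full system sums, for y ≠ 0
  have hsum : ∀ y : H, y ≠ 0 → Summable (fun n => g y (n + 1)) := by
    intro y hy
    by_contra hns
    have h0 : (∑' n : ℕ, g y (n + 1)) = 0 := tsum_eq_zero_of_not_summable hns
    have h1 := (hframe y).1
    have : (∑' n : ℕ, ∑ x ∈ S,
        ‖(inner ℂ y ((‖(A ^ (n + 1)) x‖)⁻¹ • (A ^ (n + 1)) x) : ℂ)‖ ^ 2) = 0 := h0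
    rw [this] at h1
    have hy' : 0 < ‖y‖ := norm_pos_iff.mpr hy
    nlinarith [mul_pos hB (pow_pos hy' 2)]
  have hsumt : ∀ y : H, y ≠ 0 → Summable (fun n => g y (n + (k + 1))) := by
    intro y hy
    exact (summable_nat_add_iff (f := fun n => g y (n + 1)) k).mpr (hsum y hy)
  have ht_nonneg : ∀ y : H, 0 ≤ t y := fun y => tsum_nonneg fun n => hg_nonneg y _
  -- each truncated inner product is dominated by `t y`
  have hterm : ∀ y : H, y ≠ 0 → ∀ n : ℕ, ∀ x ∈ S,
      ‖(inner ℂ y ((‖(A ^ (n + (k + 1))) x‖)⁻¹ • (A ^ (n + (k + 1))) x) : ℂ)‖ ^ 2 ≤ t y := by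
    intro y hy n x hx
    calc ‖(inner ℂ y ((‖(A ^ (n + (k + 1))) x‖)⁻¹ • (A ^ (n + (k + 1))) x) : ℂ)‖ ^ 2
        ≤ g y (n + (k + 1)) :=
          Finset.single_le_sum (f := fun x => ‖(inner ℂ y ((‖(A ^ (n + (k + 1))) x‖)⁻¹ •
            (A ^ (n + (k + 1))) x) : ℂ)‖ ^ 2) (fun x _ => by positivity) hx
      _ ≤ t y := Summable.le_tsum (hsumt y hy) n fun j _ => hg_nonneg y _
  -- the truncated system is total
  let T : Set H := {v : H | ∃ n : ℕ, ∃ x ∈ S,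
    v = (‖(A ^ (n + (k + 1))) x‖)⁻¹ • (A ^ (n + (k + 1))) x}
  have htot : (Submodule.span ℂ T).topologicalClosure = ⊤ := by
    rw [Submodule.topologicalClosure_eq_top_iff, Submodule.eq_bot_iff]
    intro y hy
    -- orthogonality to all truncated vectors
    have horth : ∀ n : ℕ, ∀ x ∈ S, (inner ℂ y ((A ^ (n + (k + 1))) x) : ℂ) = 0 := by
      intro n x hx
      have hv : ((‖(A ^ (n + (k + 1))) x‖)⁻¹ • (A ^ (n + (k + 1))) x) ∈ T := ⟨n, x, hx, rfl⟩
      have h0 : (inner ℂ ((‖(A ^ (n + (k + 1))) x‖)⁻¹ • (A ^ (n + (k + 1))) x) y : ℂ) = 0 :=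
        (Submodule.mem_orthogonal _ y).1 hy _ (Submodule.subset_span hv)
      rw [RCLike.real_smul_eq_coe_smul (K := ℂ), inner_smul_left] at h0
      have h0' : (inner ℂ ((A ^ (n + (k + 1))) x) y : ℂ) = 0 := by
        rw [RCLike.conj_ofReal] at h0
        rcases mul_eq_zero.mp h0 with h | h
        · exact absurd h (by
            simpa [RCLike.ofReal_eq_zero, inv_eq_zero, norm_eq_zero] using hANz _ x hx)
        · exact h
      rw [← inner_conj_symm, h0', map_zero]
    -- pull back through the adjoint power
    set z : H := (ContinuousLinearMap.adjoint (A ^ k)) y with hz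
    have hzin : ∀ n : ℕ, ∀ x ∈ S, (inner ℂ z ((A ^ (n + 1)) x) : ℂ) = 0 := by
      intro n x hx
      rw [hz, ContinuousLinearMap.adjoint_inner_left]
      have : (A ^ k) ((A ^ (n + 1)) x) = (A ^ (n + (k + 1))) x := by
        rw [← ContinuousLinearMap.mul_apply, ← pow_add,
          show k + (n + 1) = n + (k + 1) from by omega]
      rw [this]
      exact horth n x hx
    have hzero : (∑' n : ℕ, ∑ x ∈ S,
        ‖(inner ℂ z ((‖(A ^ (n + 1)) x‖)⁻¹ • (A ^ (n + 1)) x) : ℂ)‖ ^ 2) = 0 := by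
      have : ∀ n : ℕ, (∑ x ∈ S,
          ‖(inner ℂ z ((‖(A ^ (n + 1)) x‖)⁻¹ • (A ^ (n + 1)) x) : ℂ)‖ ^ 2) = 0 := by
        intro n
        apply Finset.sum_eq_zero
        intro x hx
        rw [RCLike.real_smul_eq_coe_smul (K := ℂ), inner_smul_right, hzin n x hx]
        simp
      rw [tsum_congr this, tsum_zero]
    have h1 := (hframe z).1
    rw [hzero] at h1
    have hz0 : z = 0 := by
      by_contra hzne
      have : 0 < ‖z‖ := norm_pos_iff.mpr hzne
      nlinarith [mul_pos hB (pow_pos this 2)]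
    -- adjoint of a power of an injective normal operator is injective
    have hy0 : (A ^ k) y = 0 := by
      have := stmt9_adj_norm (A ^ k) (stmt9_pow_normal A hA k) y
      rw [← hz, hz0, norm_zero] at this
      exact norm_eq_zero.mp this.symm
    exact stmt9_pow_inj A hinj k (by simpa using hy0)
  -- choose the approximation accuracy
  set c : ℝ := ((k * S.card : ℕ) : ℝ) with hcdef
  have hc0 : 0 ≤ c := Nat.cast_nonneg _
  set ε : ℝ := Real.sqrt (B / (4 * c + 4)) with hεdef
  have hεpos : 0 < ε := Real.sqrt_pos.mpr (by positivity)
  have hε2 : ε ^ 2 = B / (4 * c + 4) := Real.sq_sqrt (by positivity)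
  -- key approximation estimate
  have key : ∀ v : H, ∃ D : ℝ, 0 ≤ D ∧ ∀ y : H, y ≠ 0 →
      ‖(inner ℂ y v : ℂ)‖ ^ 2 ≤ 2 * D * t y + 2 * ε ^ 2 * ‖y‖ ^ 2 := by
    intro v
    have hvmem : v ∈ closure ((Submodule.span ℂ T : Submodule ℂ H) : Set H) := by
      have hv : v ∈ (Submodule.span ℂ T).topologicalClosure := htot ▸ Submodule.mem_top
      exact hv
    rw [Metric.mem_closure_iff] at hvmem
    obtain ⟨u, huT, hud⟩ := hvmem ε hεpos
    have huT' : u ∈ Submodule.span ℂ T := huT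
    rw [Submodule.mem_span_set'] at huT'
    obtain ⟨m, cf, w, hw⟩ := huT'
    refine ⟨(∑ i, ‖cf i‖) ^ 2, sq_nonneg _, fun y hy => ?_⟩
    have hwi : ∀ i : Fin m, ‖(inner ℂ y ((w i : H)) : ℂ)‖ ≤ Real.sqrt (t y) := by
      intro i
      obtain ⟨n, x, hx, hwx⟩ := (w i).2
      rw [Real.le_sqrt (norm_nonneg _) (ht_nonneg y), hwx]
      exact hterm y hy n x hx
    have hu : ‖(inner ℂ y u : ℂ)‖ ≤ (∑ i, ‖cf i‖) * Real.sqrt (t y) := by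
      rw [← hw]
      have hin : (inner ℂ y (∑ i, cf i • (w i : H)) : ℂ) = ∑ i, cf i * inner ℂ y ((w i : H)) := by
        rw [inner_sum]
        exact Finset.sum_congr rfl fun i _ => inner_smul_right _ _ _
      rw [hin]
      calc ‖∑ i, cf i * (inner ℂ y ((w i : H)) : ℂ)‖
          ≤ ∑ i, ‖cf i * (inner ℂ y ((w i : H)) : ℂ)‖ := norm_sum_le _ _
        _ = ∑ i, ‖cf i‖ * ‖(inner ℂ y ((w i : H)) : ℂ)‖ := by
            exact Finset.sum_congr rfl fun i _ => norm_mul _ _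
        _ ≤ ∑ i, ‖cf i‖ * Real.sqrt (t y) :=
            Finset.sum_le_sum fun i _ =>
              mul_le_mul_of_nonneg_left (hwi i) (norm_nonneg _)
        _ = (∑ i, ‖cf i‖) * Real.sqrt (t y) := by rw [Finset.sum_mul]
    have hsplit : ‖(inner ℂ y v : ℂ)‖ ≤ (∑ i, ‖cf i‖) * Real.sqrt (t y) + ‖y‖ * ε := by
      have hd : (inner ℂ y v : ℂ) = inner ℂ y u + inner ℂ y (v - u) := by
        rw [← inner_add_right]
        congr 1
        abel
      rw [hd]
      refine (norm_add_le _ _).trans (add_le_add hu ?_)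
      refine (norm_inner_le_norm _ _).trans ?_
      have hvu : ‖v - u‖ < ε := by rw [← dist_eq_norm]; exact hud
      exact mul_le_mul_of_nonneg_left hvu.le (norm_nonneg _)
    have hst : Real.sqrt (t y) ^ 2 = t y := Real.sq_sqrt (ht_nonneg y)
    nlinarith [hsplit, norm_nonneg (inner ℂ y v : ℂ), Real.sqrt_nonneg (t y),
      norm_nonneg y, Finset.sum_nonneg (s := Finset.univ) (fun i _ => norm_nonneg (cf i)),
      sq_nonneg ((∑ i, ‖cf i‖) * Real.sqrt (t y) - ‖y‖ * ε), hεpos.le,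
      mul_nonneg (Finset.sum_nonneg (s := (Finset.univ : Finset (Fin m))) (fun i _ => norm_nonneg (cf i)))
        (Real.sqrt_nonneg (t y)), mul_nonneg (norm_nonneg y) hεpos.le]
  choose Df hDf0 hDf using key
  set Dt : ℝ := ∑ i ∈ Finset.range k, ∑ x ∈ S,
      Df ((‖(A ^ (i + 1)) x‖)⁻¹ • (A ^ (i + 1)) x) with hDtdef
  have hDt0 : 0 ≤ Dt := Finset.sum_nonneg fun i _ => Finset.sum_nonneg fun x _ => hDf0 _
  have hden : (0 : ℝ) < 2 * (2 * Dt + 1) := by nlinarith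
  refine ⟨B / (2 * (2 * Dt + 1)), C, by positivity, fun y => ?_⟩
  by_cases hy : y = 0
  · subst hy
    constructor
    · simp
    · simp
  · have h1 : B * ‖y‖ ^ 2 ≤ ∑' n : ℕ, g y (n + 1) := (hframe y).1
    have h2 : (∑' n : ℕ, g y (n + 1)) ≤ C * ‖y‖ ^ 2 := (hframe y).2
    have hdec : (∑' n : ℕ, g y (n + 1))
        = ∑ i ∈ Finset.range k, g y (i + 1) + ∑' n : ℕ, g y (n + k + 1) :=
      (Summable.sum_add_tsum_nat_add (f := fun n => g y (n + 1)) k (hsum y hy)).symm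
    have hshift : (∑' n : ℕ, g y (n + k + 1)) = t y := by
      apply tsum_congr
      intro n
      rw [show n + k + 1 = n + (k + 1) from by omega]
    have hfull : B * ‖y‖ ^ 2 ≤ ∑ i ∈ Finset.range k, g y (i + 1) + t y := by
      calc B * ‖y‖ ^ 2 ≤ ∑' n : ℕ, g y (n + 1) := h1
        _ = _ := by rw [hdec, hshift]
    have hR : ∑ i ∈ Finset.range k, g y (i + 1)
        ≤ 2 * Dt * t y + 2 * c * ε ^ 2 * ‖y‖ ^ 2 := by
      have hb : ∑ i ∈ Finset.range k, g y (i + 1)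
          ≤ ∑ i ∈ Finset.range k, ∑ x ∈ S,
            (2 * Df ((‖(A ^ (i + 1)) x‖)⁻¹ • (A ^ (i + 1)) x) * t y + 2 * ε ^ 2 * ‖y‖ ^ 2) :=
        Finset.sum_le_sum fun i _ => Finset.sum_le_sum fun x hx => hDf _ y hy
      refine hb.trans (le_of_eq ?_)
      rw [hDtdef, hcdef]
      simp only [Finset.sum_add_distrib, Finset.sum_const, Finset.card_range, nsmul_eq_mul,
        ← Finset.sum_mul, ← Finset.mul_sum, Nat.cast_mul]
      ring
    have hεb : 2 * c * ε ^ 2 ≤ B / 2 := by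
      rw [hε2]
      have he : 2 * c * (B / (4 * c + 4)) = (2 * c * B) / (4 * c + 4) := by ring
      rw [he, div_le_div_iff₀ (by positivity) (by norm_num : (0:ℝ) < 2)]
      nlinarith [mul_nonneg hc0 hB.le]
    have hlow : B / (2 * (2 * Dt + 1)) * ‖y‖ ^ 2 ≤ t y := by
      rw [div_mul_eq_mul_div, div_le_iff₀ hden]
      nlinarith [ht_nonneg y, sq_nonneg ‖y‖, hfull, hR, hεb,
        mul_nonneg (mul_nonneg (by norm_num : (0:ℝ) ≤ 2) hDt0) (ht_nonneg y)]
    have hup : t y ≤ C * ‖y‖ ^ 2 := by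
      have hRnn : 0 ≤ ∑ i ∈ Finset.range k, g y (i + 1) :=
        Finset.sum_nonneg fun i _ => hg_nonneg y _
      rw [hdec, hshift] at h2
      linarith
    exact ⟨hlow, hup⟩
end

section
/- Let A be a bounded normal operator on an infinite-dimensional Hilbert space H with ‖A‖ = 1 and σ(A) ⊆ {z ∈ ℂ : |z| = 1} (i.e., A is unitary). Then for no finite set S ⊆ H and no unit vectors (x/‖x‖)_{x∈S} is {A^n (x/‖x‖) : n ≥ 0, x ∈ S} a frame for H. -/
/-- Let `A` be a unitary operator (normal with `‖A‖ = 1` and spectrum in the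
unit circle) on an infinite-dimensional Hilbert space `H`.  Then for no finite set `S ⊆ H` of
nonzero vectors is `{A^n (x/‖x‖) : n ≥ 0, x ∈ S}` a frame for `H`. -/
theorem stmt_10 {H : Type*} [NormedAddCommGroup H] [InnerProductSpace ℂ H] [CompleteSpace H]
    (hinf : ¬ FiniteDimensional ℂ H)
    (A : H →L[ℂ] H)
    (hA₁ : ContinuousLinearMap.adjoint A ∘L A = 1)
    (hA₂ : A ∘L ContinuousLinearMap.adjoint A = 1)
    (S : Finset H) (hS : ∀ x ∈ S, x ≠ 0) :
    ¬ ∃ B C : ℝ, 0 < B ∧ ∀ y : H,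
      B * ‖y‖ ^ 2 ≤ (∑' n : ℕ, ∑ x ∈ S, ‖(inner ℂ y ((A ^ n) ((‖x‖)⁻¹ • x)) : ℂ)‖ ^ 2) ∧
      (∑' n : ℕ, ∑ x ∈ S, ‖(inner ℂ y ((A ^ n) ((‖x‖)⁻¹ • x)) : ℂ)‖ ^ 2) ≤ C * ‖y‖ ^ 2 := by
  rintro ⟨B, C, hB, hf⟩
  have hnt : Nontrivial H := by
    by_contra h
    rw [not_nontrivial_iff_subsingleton] at h
    haveI := h
    exact hinf inferInstance
  obtain ⟨y, hy⟩ := exists_ne (0 : H)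
  set T : H →L[ℂ] H := ContinuousLinearMap.adjoint A with hT
  -- T is an isometry
  have hTnorm : ∀ u : H, ‖T u‖ = ‖u‖ := by
    intro u
    have h1 : (inner ℂ (T u) (T u) : ℂ) = inner ℂ u u := by
      rw [hT, ContinuousLinearMap.adjoint_inner_left]
      have : A ((ContinuousLinearMap.adjoint A) u) = u := by
        have := congrArg (fun f : H →L[ℂ] H => f u) hA₂
        simpa using this
      rw [this]
    rw [inner_self_eq_norm_sq_to_K, inner_self_eq_norm_sq_to_K] at h1
    have h2' : ‖T u‖ ^ 2 = ‖u‖ ^ 2 := by exact_mod_cast h1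
    nlinarith [norm_nonneg (T u), norm_nonneg u]
  have hTpow : ∀ (m : ℕ) (u : H), ‖(T ^ m) u‖ = ‖u‖ := by
    intro m
    induction m with
    | zero => intro u; simp
    | succ k ih =>
      intro u
      rw [pow_succ, ContinuousLinearMap.mul_apply, ih, hTnorm]
  -- the sequence of frame coefficients for y
  set f : ℕ → ℝ := fun n => ∑ x ∈ S, ‖(inner ℂ y ((A ^ n) ((‖x‖)⁻¹ • x)) : ℂ)‖ ^ 2 with hfdef
  have hfnn : ∀ n, 0 ≤ f n := by
    intro n
    exact Finset.sum_nonneg fun x _ => by positivity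
  have hpos : 0 < B * ‖y‖ ^ 2 :=
    mul_pos hB (pow_pos (norm_pos_iff.mpr hy) 2)
  by_cases hsum : Summable f
  · -- shift identity
    have hshift : ∀ m : ℕ,
        (fun n => ∑ x ∈ S, ‖(inner ℂ ((T ^ m) y) ((A ^ n) ((‖x‖)⁻¹ • x)) : ℂ)‖ ^ 2)
          = fun n => f (n + m) := by
      intro m
      funext n
      rw [hfdef]
      refine Finset.sum_congr rfl fun x _ => ?_
      congr 1
      have hTm : (T ^ m) = ContinuousLinearMap.adjoint (A ^ m) := by
        rw [hT, ← ContinuousLinearMap.star_eq_adjoint, ← ContinuousLinearMap.star_eq_adjoint,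
          star_pow]
      rw [hTm, ContinuousLinearMap.adjoint_inner_left, ← ContinuousLinearMap.mul_apply,
        ← pow_add, add_comm m n]
    have key : ∀ m : ℕ, B * ‖y‖ ^ 2 ≤ ∑' n, f (n + m) := by
      intro m
      have h := (hf ((T ^ m) y)).1
      rw [hTpow m y] at h
      calc B * ‖y‖ ^ 2 ≤ _ := h
        _ = ∑' n, f (n + m) := by rw [tsum_congr fun n => congrFun (hshift m) n]
    have htend : Filter.Tendsto (fun m => ∑' n, f (n + m)) Filter.atTop (nhds 0) :=
      tendsto_sum_nat_add f
    obtain ⟨m, hm⟩ := (htend.eventually (gt_mem_nhds hpos)).exists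
    exact absurd (key m) (not_le.mpr hm)
  · have h0 : (∑' n, f n) = 0 := tsum_eq_zero_of_not_summable hsum
    have h := (hf y).1
    rw [show (∑' (n : ℕ), ∑ x ∈ S, ‖(inner ℂ y ((A ^ n) ((‖x‖)⁻¹ • x)) : ℂ)‖ ^ 2) = ∑' n, f n
      from rfl, h0] at h
    exact absurd h (not_le.mpr hpos)
end

section
/- Let A be a bounded normal operator on an infinite-dimensional Hilbert space H, let x ∈ H with Ax ≠ 0, let K, m ∈ ℕ, and suppose A is invertible. If {A^n x/‖A^n x‖ : n ≥ K} is a frame with lower bound C₁ and upper bound D, then for every y in the reducing subspace M = range E({z : s ≤ |z| ≤ r}) (with 0 < s ≤ r) that is orthogonal to A^n x for all K ≤ n ≤ m+K−1, we have D‖y‖² ≥ C₁ ρ^{2m} r^{−2m} ‖y‖², where ρ = ‖A^{K+1}x‖/‖A^K x‖. -/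
open MeasureTheory

/-- A projection-valued spectral measure `E` for a bounded operator `A` on a complex Hilbert
space: each `E s` is an orthogonal projection, `E` is multiplicative, normalized, countably
additive (in the strong sense), commutes with `A`, and for each vector `y` the scalar measure
`ν_s = ⟨E(s)y, y⟩` represents the moments `‖A^m y‖² = ∫ |z|^{2m} dν`. -/
structure IsSpectralMeasure {H : Type*} [NormedAddCommGroup H] [InnerProductSpace ℂ H]
    [CompleteSpace H] (A : H →L[ℂ] H) (E : Set ℂ → H →L[ℂ] H) : Prop where
  idem : ∀ s : Set ℂ, MeasurableSet s → E s ∘L E s = E s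
  selfAdjoint : ∀ s : Set ℂ, MeasurableSet s → ContinuousLinearMap.adjoint (E s) = E s
  inter : ∀ s t : Set ℂ, MeasurableSet s → MeasurableSet t → E (s ∩ t) = E s ∘L E t
  univ : E Set.univ = 1
  additive : ∀ s : ℕ → Set ℂ, (∀ n, MeasurableSet (s n)) →
    Pairwise (Function.onFun Disjoint s) →
    ∀ y : H, HasSum (fun n => E (s n) y) (E (⋃ n, s n) y)
  commutes : ∀ s : Set ℂ, MeasurableSet s → A ∘L E s = E s ∘L A
  moment : ∀ y : H, ∃ ν : Measure ℂ, IsFiniteMeasure ν ∧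
    (∀ s : Set ℂ, MeasurableSet s → ν s = ENNReal.ofReal (inner ℂ (E s y) y : ℂ).re) ∧
    ∀ m : ℕ, ‖(A ^ m) y‖ ^ 2 = ∫ z, ‖z‖ ^ (2 * m) ∂ν

section Aux

variable {H : Type*} [NormedAddCommGroup H] [InnerProductSpace ℂ H] [CompleteSpace H]

/-- For a normal operator `T`, `‖T† v‖ = ‖T v‖`. -/
lemma aux_norm_adjoint_apply (T : H →L[ℂ] H) (hT : star T * T = T * star T) (v : H) :
    ‖ContinuousLinearMap.adjoint T v‖ = ‖T v‖ := by
  set S := ContinuousLinearMap.adjoint T with hS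
  have hstar : star T = S := ContinuousLinearMap.star_eq_adjoint T
  have key : (inner ℂ (S v) (S v) : ℂ) = inner ℂ (T v) (T v) := by
    have h1 : (inner ℂ (S v) (S v) : ℂ) = inner ℂ v (T (S v)) :=
      ContinuousLinearMap.adjoint_inner_left T (S v) v
    have h2 : (inner ℂ (T v) (T v) : ℂ) = inner ℂ v (S (T v)) :=
      (ContinuousLinearMap.adjoint_inner_right T v (T v)).symm
    have h3 : T (S v) = S (T v) := by
      have : (T * star T) v = (star T * T) v := by rw [hT]
      simpa [hstar, ContinuousLinearMap.mul_apply] using this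
    rw [h1, h3, h2]
  have h4 : ‖S v‖ ^ 2 = ‖T v‖ ^ 2 := by
    have h5 : RCLike.re (inner ℂ (S v) (S v) : ℂ) = RCLike.re (inner ℂ (T v) (T v) : ℂ) := by
      rw [key]
    rwa [inner_self_eq_norm_sq, inner_self_eq_norm_sq] at h5
  nlinarith [norm_nonneg (S v), norm_nonneg (T v), sq_nonneg (‖S v‖ - ‖T v‖)]

end Aux

set_option maxHeartbeats 1000000 in
/-- Let `A` be a bounded normal invertible operator on an infinite-dimensional
Hilbert space with spectral measure `E`, `x ∈ H` with `Ax ≠ 0`, and suppose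
`{A^n x/‖A^n x‖ : n ≥ K}` is a frame with lower bound `C₁` and upper bound `D`.  Then for every
`y` in the reducing subspace `M = range E({z : s ≤ |z| ≤ r})` (with `0 < s ≤ r`) orthogonal to
`A^n x` for all `K ≤ n ≤ m+K-1`, we have
`D‖y‖² ≥ C₁ ρ^{2m} r^{-2m} ‖y‖²` where `ρ = ‖A^{K+1}x‖/‖A^K x‖`. -/
theorem stmt_19 {H : Type*} [NormedAddCommGroup H] [InnerProductSpace ℂ H] [CompleteSpace H]
    (hinf : ¬ FiniteDimensional ℂ H)
    (A : H →L[ℂ] H) (hA : IsStarNormal A) (hinv : Function.Bijective A)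
    (x : H) (hx : A x ≠ 0) (K m : ℕ)
    (C₁ D : ℝ) (hC₁ : 0 < C₁)
    (hframe : ∀ y : H,
      C₁ * ‖y‖ ^ 2 ≤
        (∑' n : ℕ, ‖(inner ℂ y ((‖(A ^ (n + K)) x‖)⁻¹ • (A ^ (n + K)) x) : ℂ)‖ ^ 2) ∧
      (∑' n : ℕ, ‖(inner ℂ y ((‖(A ^ (n + K)) x‖)⁻¹ • (A ^ (n + K)) x) : ℂ)‖ ^ 2) ≤
        D * ‖y‖ ^ 2)
    (E : Set ℂ → H →L[ℂ] H) (hE : IsSpectralMeasure A E)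
    (s r : ℝ) (hs : 0 < s) (hsr : s ≤ r)
    (y : H) (hy : E {z : ℂ | s ≤ ‖z‖ ∧ ‖z‖ ≤ r} y = y)
    (horth : ∀ n : ℕ, K ≤ n → n < K + m → (inner ℂ y ((A ^ n) x) : ℂ) = 0) :
    C₁ * (‖(A ^ (K + 1)) x‖ / ‖(A ^ K) x‖) ^ (2 * m) / r ^ (2 * m) * ‖y‖ ^ 2 ≤
      D * ‖y‖ ^ 2 := by
  classical
  by_cases hy0 : y = 0
  · simp [hy0]
  -- basic positivity
  have hr : 0 < r := lt_of_lt_of_le hs hsr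
  have hr2m : 0 < r ^ (2 * m) := pow_pos hr _
  have hny : (0:ℝ) < ‖y‖ ^ 2 := pow_pos (norm_pos_iff.mpr hy0) 2
  have hx0 : x ≠ 0 := fun h => hx (by simp [h])
  -- injectivity of powers
  have hinj : ∀ (n : ℕ) (v : H), (A ^ n) v = 0 → v = 0 := by
    intro n
    induction n with
    | zero => intro v hv; simpa using hv
    | succ k ih =>
      intro v hv
      rw [pow_succ, ContinuousLinearMap.mul_apply] at hv
      have h1 : A v = 0 := ih _ hv
      have : A v = A 0 := by simpa using h1
      exact hinv.injective this
  have hax : ∀ n : ℕ, (A ^ n) x ≠ 0 := fun n h => hx0 (hinj n x h)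
  have hapos : ∀ n : ℕ, (0:ℝ) < ‖(A ^ n) x‖ := fun n => norm_pos_iff.mpr (hax n)
  -- normality: ‖A† v‖ = ‖A v‖
  have hAnormal : star A * A = A * star A := hA.star_comm_self
  have hadj : ∀ v : H, ‖ContinuousLinearMap.adjoint A v‖ = ‖A v‖ :=
    aux_norm_adjoint_apply A hAnormal
  -- Cauchy–Schwarz step: a_{j+1}² ≤ a_{j+2} a_j
  have hCS : ∀ j : ℕ, ‖(A ^ (j+1)) x‖ ^ 2 ≤ ‖(A ^ (j+2)) x‖ * ‖(A ^ j) x‖ := by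
    intro j
    have h1 : (A ^ (j+1)) x = A ((A ^ j) x) := by
      rw [pow_succ', ContinuousLinearMap.mul_apply]
    have h2 : (inner ℂ ((A ^ (j+1)) x) ((A ^ (j+1)) x) : ℂ)
        = inner ℂ ((A ^ j) x) (ContinuousLinearMap.adjoint A ((A ^ (j+1)) x)) := by
      rw [ContinuousLinearMap.adjoint_inner_right, ← h1]
    have h3 : ‖(A ^ (j+1)) x‖ ^ 2
        = ‖(inner ℂ ((A ^ (j+1)) x) ((A ^ (j+1)) x) : ℂ)‖ := by
      rw [inner_self_eq_norm_sq_to_K, norm_pow, RCLike.norm_ofReal, abs_norm]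
    rw [h3, h2]
    calc ‖(inner ℂ ((A ^ j) x) (ContinuousLinearMap.adjoint A ((A ^ (j+1)) x)) : ℂ)‖
        ≤ ‖(A ^ j) x‖ * ‖ContinuousLinearMap.adjoint A ((A ^ (j+1)) x)‖ :=
          norm_inner_le_norm _ _
      _ = ‖(A ^ j) x‖ * ‖A ((A ^ (j+1)) x)‖ := by rw [hadj]
      _ = ‖(A ^ (j+2)) x‖ * ‖(A ^ j) x‖ := by
          rw [mul_comm]
          congr 1
          have h5 : (A ^ (j+2)) x = A ((A ^ (j+1)) x) := by
            rw [show (j+2) = (j+1)+1 from rfl, pow_succ', ContinuousLinearMap.mul_apply]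
          rw [h5]
  set ρ : ℝ := ‖(A ^ (K + 1)) x‖ / ‖(A ^ K) x‖ with hρdef
  have hρ0 : 0 ≤ ρ := div_nonneg (norm_nonneg _) (norm_nonneg _)
  -- ratio monotonicity: ρ * a_j ≤ a_{j+1} for j ≥ K
  have hratio : ∀ j : ℕ, K ≤ j → ρ * ‖(A ^ j) x‖ ≤ ‖(A ^ (j+1)) x‖ := by
    intro j hj
    induction j, hj using Nat.le_induction with
    | base =>
      rw [hρdef, div_mul_cancel₀ _ (ne_of_gt (hapos K))]
    | succ k hk ih =>
      have h1 := hCS k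
      have h2 := hapos k
      have h3 := hapos (k+1)
      have h4 := hapos (k+2)
      have h5 : ρ * ‖(A ^ k) x‖ * ‖(A ^ (k+1)) x‖ ≤ ‖(A ^ (k+1)) x‖ * ‖(A ^ (k+1)) x‖ :=
        mul_le_mul_of_nonneg_right ih (norm_nonneg _)
      have goal' : ρ * ‖(A ^ (k+1)) x‖ * ‖(A ^ k) x‖ ≤ ‖(A ^ (k+2)) x‖ * ‖(A ^ k) x‖ := by
        nlinarith
      exact le_of_mul_le_mul_right (by linarith [goal']) h2
  -- power estimate: ρ^p * a_j ≤ a_{j+p} for j ≥ K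
  have hpow : ∀ (j : ℕ), K ≤ j → ∀ p : ℕ, ρ ^ p * ‖(A ^ j) x‖ ≤ ‖(A ^ (j + p)) x‖ := by
    intro j hj p
    induction p with
    | zero => simp
    | succ q ih =>
      have h1 : ρ ^ (q+1) * ‖(A ^ j) x‖ = ρ * (ρ ^ q * ‖(A ^ j) x‖) := by ring
      rw [h1]
      calc ρ * (ρ ^ q * ‖(A ^ j) x‖) ≤ ρ * ‖(A ^ (j + q)) x‖ :=
            mul_le_mul_of_nonneg_left ih hρ0
        _ ≤ ‖(A ^ (j + q + 1)) x‖ := hratio (j+q) (le_trans hj (Nat.le_add_right _ _))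
        _ = ‖(A ^ (j + (q+1))) x‖ := by rw [Nat.add_assoc]
  -- the auxiliary vector u
  set T : H →L[ℂ] H := A ^ m with hT
  set u : H := ContinuousLinearMap.adjoint T y with hu
  have hTnormal : star T * T = T * star T := by
    have h1 : Commute (star A) A := hAnormal
    have h2 : Commute ((star A) ^ m) (A ^ m) := h1.pow_pow m m
    have h3 : star T = (star A) ^ m := by rw [hT, star_pow]
    rw [h3, hT]; exact h2
  have hnormu : ‖u‖ = ‖T y‖ := aux_norm_adjoint_apply T hTnormal y
  have huinner : ∀ w : H, (inner ℂ u w : ℂ) = inner ℂ y (T w) :=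
    fun w => ContinuousLinearMap.adjoint_inner_left T w y
  -- spectral / moment estimate : ‖T y‖² ≤ r^{2m} ‖y‖²
  set S : Set ℂ := {z : ℂ | s ≤ ‖z‖ ∧ ‖z‖ ≤ r} with hSdef
  have hSm : MeasurableSet S := by
    have : S = {z : ℂ | s ≤ ‖z‖} ∩ {z : ℂ | ‖z‖ ≤ r} := rfl
    rw [this]
    exact ((isClosed_le continuous_const continuous_norm).measurableSet).inter
      ((isClosed_le continuous_norm continuous_const).measurableSet)
  have hEempty : ∀ v : H, E ∅ v = 0 := by
    intro v
    have h := hE.additive (fun _ => (∅ : Set ℂ)) (fun _ => MeasurableSet.empty)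
      (fun i j hij => by simp [Function.onFun]) v
    simp only [Set.iUnion_empty] at h
    have h2 := h.summable.tendsto_atTop_zero
    exact tendsto_nhds_unique tendsto_const_nhds h2
  have hEScompl : E Sᶜ y = 0 := by
    have h2 : E (Sᶜ ∩ S) = E Sᶜ ∘L E S := hE.inter _ _ hSm.compl hSm
    have h3 : (Sᶜ ∩ S : Set ℂ) = ∅ := by simp
    calc E Sᶜ y = E Sᶜ (E S y) := by rw [hy]
      _ = E (Sᶜ ∩ S) y := by rw [h2]; rfl
      _ = E ∅ y := by rw [h3]
      _ = 0 := hEempty y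
  obtain ⟨ν, hνfin, hνmeas, hνmom⟩ := hE.moment y
  have hνScompl : ν Sᶜ = 0 := by
    rw [hνmeas Sᶜ hSm.compl, hEScompl]
    simp
  have hνuniv : ν Set.univ = ENNReal.ofReal (‖y‖ ^ 2) := by
    rw [hνmeas Set.univ MeasurableSet.univ, hE.univ]
    congr 1
    have h1 : ((1 : H →L[ℂ] H)) y = y := rfl
    rw [h1]
    simpa using inner_self_eq_norm_sq (𝕜 := ℂ) y
  have hTy : ‖T y‖ ^ 2 ≤ r ^ (2 * m) * ‖y‖ ^ 2 := by
    rw [hT, hνmom m]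
    have hae : ∀ᵐ z ∂ν, ‖z‖ ^ (2 * m) ≤ r ^ (2 * m) := by
      rw [Filter.eventually_iff, mem_ae_iff]
      apply measure_mono_null _ hνScompl
      intro z hz
      simp only [Set.mem_compl_iff, Set.mem_setOf_eq, hSdef]
      intro hzS
      exact hz (by simp only [Set.mem_setOf_eq] at *
                   exact pow_le_pow_left₀ (norm_nonneg z) hzS.2 (2 * m))
    calc ∫ z, ‖z‖ ^ (2 * m) ∂ν ≤ ∫ _, r ^ (2 * m) ∂ν :=
          integral_mono_of_nonneg (Filter.Eventually.of_forall fun z => by positivity)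
            (integrable_const _) hae
      _ = (ν Set.univ).toReal • r ^ (2 * m) := by rw [integral_const]; rfl
      _ = r ^ (2 * m) * ‖y‖ ^ 2 := by
          rw [hνuniv, ENNReal.toReal_ofReal (le_of_lt hny), smul_eq_mul, mul_comm]
  -- the frame sequences
  set f : ℕ → ℝ := fun n => ‖(inner ℂ y ((‖(A ^ (n + K)) x‖)⁻¹ • (A ^ (n + K)) x) : ℂ)‖ ^ 2
    with hfdef
  set g : ℕ → ℝ := fun n => ‖(inner ℂ u ((‖(A ^ (n + K)) x‖)⁻¹ • (A ^ (n + K)) x) : ℂ)‖ ^ 2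
    with hgdef
  have hterm : ∀ (v : H) (n : ℕ),
      ‖(inner ℂ v ((‖(A ^ (n + K)) x‖)⁻¹ • (A ^ (n + K)) x) : ℂ)‖ ^ 2
        = (‖(A ^ (n + K)) x‖⁻¹) ^ 2 * ‖(inner ℂ v ((A ^ (n + K)) x) : ℂ)‖ ^ 2 := by
    intro v n
    rw [RCLike.real_smul_eq_coe_smul (K := ℂ), inner_smul_right, norm_mul, mul_pow]
    congr 2
    rw [RCLike.norm_ofReal, abs_of_nonneg (inv_nonneg.mpr (norm_nonneg _))]
  -- first m terms of f vanish
  have hfz : ∀ n : ℕ, n < m → f n = 0 := by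
    intro n hn
    simp only [hfdef]
    rw [hterm y n, horth (n + K) (Nat.le_add_left _ _) (by omega)]
    simp
  -- key termwise comparison
  have hkey : ∀ n : ℕ, ρ ^ (2 * m) * f (n + m) ≤ g n := by
    intro n
    have hg_inner : (inner ℂ u ((A ^ (n + K)) x) : ℂ) = inner ℂ y ((A ^ (n + m + K)) x) := by
      rw [huinner, hT]
      congr 1
      rw [← ContinuousLinearMap.mul_apply, ← pow_add]
      congr 2
      omega
    simp only [hfdef, hgdef]
    rw [hterm y (n + m), hterm u n, hg_inner]
    have hidx : n + m + K = n + K + m := by omega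
    set Z : ℝ := ‖(inner ℂ y ((A ^ (n + m + K)) x) : ℂ)‖ ^ 2 with hZ
    have hZ0 : 0 ≤ Z := by positivity
    have ha' : (0:ℝ) < ‖(A ^ (n + m + K)) x‖ := hapos _
    have hb : (0:ℝ) < ‖(A ^ (n + K)) x‖ := hapos _
    have hbound : ρ ^ m * ‖(A ^ (n + K)) x‖ ≤ ‖(A ^ (n + m + K)) x‖ := by
      rw [hidx]
      exact hpow (n + K) (Nat.le_add_left _ _) m
    have hstep : ρ ^ m * ‖(A ^ (n + m + K)) x‖⁻¹ ≤ ‖(A ^ (n + K)) x‖⁻¹ := by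
      rw [← div_eq_mul_inv, ← one_div, div_le_div_iff₀ ha' hb]
      linarith
    have hsq : (ρ ^ m * ‖(A ^ (n + m + K)) x‖⁻¹) ^ 2 ≤ (‖(A ^ (n + K)) x‖⁻¹) ^ 2 :=
      pow_le_pow_left₀ (by positivity) hstep 2
    have h2m : ρ ^ (2 * m) = ρ ^ m * ρ ^ m := by rw [two_mul, pow_add]
    calc ρ ^ (2 * m) * ((‖(A ^ (n + m + K)) x‖⁻¹) ^ 2 * Z)
        = (ρ ^ m * ‖(A ^ (n + m + K)) x‖⁻¹) ^ 2 * Z := by rw [h2m]; ring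
      _ ≤ (‖(A ^ (n + K)) x‖⁻¹) ^ 2 * Z := mul_le_mul_of_nonneg_right hsq hZ0
  -- frame bounds
  have hfy1 : C₁ * ‖y‖ ^ 2 ≤ ∑' n, f n := by rw [hfdef]; exact (hframe y).1
  have hfy2 : (∑' n, f n) ≤ D * ‖y‖ ^ 2 := by rw [hfdef]; exact (hframe y).2
  have hgu1 : C₁ * ‖u‖ ^ 2 ≤ ∑' n, g n := by rw [hgdef]; exact (hframe u).1
  have hgu2 : (∑' n, g n) ≤ D * ‖u‖ ^ 2 := by rw [hgdef]; exact (hframe u).2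
  have hf_sum : Summable f := by
    by_contra hns
    have h0 : (∑' n, f n) = 0 := tsum_eq_zero_of_not_summable hns
    rw [h0] at hfy1
    nlinarith
  have hg_sum : Summable g := by
    by_contra hns
    have h0 : (∑' n, g n) = 0 := tsum_eq_zero_of_not_summable hns
    rw [h0] at hgu1
    have hu0 : ‖u‖ ^ 2 ≤ 0 := by nlinarith
    have hu0' : u = 0 := by
      have : ‖u‖ = 0 := by nlinarith [norm_nonneg u, sq_nonneg ‖u‖]
      exact norm_eq_zero.mp this
    have hTy0 : T y = 0 := by
      have : ‖T y‖ = 0 := by rw [← hnormu, hu0', norm_zero]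
      exact norm_eq_zero.mp this
    exact hy0 (hinj m y (by rw [← hT]; exact hTy0))
  -- shift identity
  have hshift : (∑' n, f n) = ∑' n, f (n + m) := by
    have h1 := Summable.sum_add_tsum_nat_add (f := f) m hf_sum
    have h2 : (∑ i ∈ Finset.range m, f i) = 0 :=
      Finset.sum_eq_zero fun i hi => hfz i (Finset.mem_range.mp hi)
    rw [← h1, h2, zero_add]
  have hfm_sum : Summable (fun n => f (n + m)) := (summable_nat_add_iff m).mpr hf_sum
  -- sum comparison
  have hsum_cmp : ρ ^ (2 * m) * (∑' n, f n) ≤ ∑' n, g n := by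
    rw [hshift, ← tsum_mul_left]
    exact Summable.tsum_le_tsum hkey (hfm_sum.mul_left _) hg_sum
  -- assemble
  have c1 : C₁ * ‖y‖ ^ 2 ≤ ∑' n, f n := hfy1
  have c2 : (∑' n, g n) ≤ D * ‖u‖ ^ 2 := hgu2
  have c3 : ‖u‖ ^ 2 ≤ r ^ (2 * m) * ‖y‖ ^ 2 := by rw [hnormu]; exact hTy
  have hD : 0 < D := by
    have h1 : C₁ * ‖y‖ ^ 2 ≤ D * ‖y‖ ^ 2 := le_trans hfy1 hfy2
    nlinarith
  have main : ρ ^ (2 * m) * (C₁ * ‖y‖ ^ 2) ≤ D * (r ^ (2 * m) * ‖y‖ ^ 2) := by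
    calc ρ ^ (2 * m) * (C₁ * ‖y‖ ^ 2) ≤ ρ ^ (2 * m) * (∑' n, f n) :=
          mul_le_mul_of_nonneg_left c1 (by positivity)
      _ ≤ ∑' n, g n := hsum_cmp
      _ ≤ D * ‖u‖ ^ 2 := c2
      _ ≤ D * (r ^ (2 * m) * ‖y‖ ^ 2) := mul_le_mul_of_nonneg_left c3 (le_of_lt hD)
  rw [div_mul_eq_mul_div, div_le_iff₀ hr2m]
  nlinarith [main]
end
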